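/- arXiv:math/0306108 — 4 statements merged into one kernel-verified Lean document; each statement's English description precedes it below -/
import Mathlib

section
/- Let σ > 1/2, α > 1/2 and σ + α > 2. Then lim_{λ → 0⁺} ∫_{ℝ³} ∫_{ℝ³} ⟨x⟩^{-2σ} ( |e^{iλ|x−y|} − 1|² / |x − y|² ) ⟨y⟩^{-2α} dx dy = 0. -/
open MeasureTheory

noncomputable section

abbrev E3 : Type := EuclideanSpace ℝ (Fin 3)

/-- The Japanese bracket `⟨x⟩ = (1 + |x|²)^{1/2}`. -/
def jap (x : E3) : ℝ := Real.sqrt (1 + ‖x‖ ^ 2)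

namespace S11

open Real Set Metric Filter
open scoped ENNReal NNReal


open Real Set Metric Filter

lemma one_le_jap (x : E3) : 1 ≤ jap x := by
  have : (1:ℝ) = Real.sqrt 1 := by simp
  rw [this, jap]
  apply Real.sqrt_le_sqrt; nlinarith [sq_nonneg ‖x‖]

lemma jap_pos (x : E3) : 0 < jap x := lt_of_lt_of_le one_pos (one_le_jap x)

lemma jap_sq (x : E3) : jap x ^ 2 = 1 + ‖x‖ ^ 2 := by
  rw [jap, Real.sq_sqrt]; positivity

lemma norm_le_jap (x : E3) : ‖x‖ ≤ jap x := by
  have h := jap_sq x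
  nlinarith [norm_nonneg x, jap_pos x]

lemma jap_lip (x y : E3) : jap x ≤ jap y + ‖x - y‖ := by
  have h1 : ‖x‖ ≤ ‖y‖ + ‖x - y‖ := by
    calc ‖x‖ = ‖y + (x - y)‖ := by congr 1; abel
    _ ≤ ‖y‖ + ‖x - y‖ := norm_add_le _ _
  have h2 : jap y + ‖x - y‖ = Real.sqrt ((jap y + ‖x - y‖) ^ 2) := by
    rw [Real.sqrt_sq]
    have := jap_pos y
    positivity
  rw [h2, jap]
  apply Real.sqrt_le_sqrt
  have h3 := jap_sq y
  have h4 := norm_le_jap y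
  nlinarith [norm_nonneg x, norm_nonneg y, norm_nonneg (x - y), jap_pos y]

lemma measurable_jap : Measurable jap := by
  have : Continuous jap := by
    unfold jap; fun_prop
  exact this.measurable

lemma jap_rpow_anti {p : ℝ} (hp : 0 ≤ p) {a : ℝ} {x : E3} (ha : 0 < a) (hax : a ≤ jap x) :
    jap x ^ (-p) ≤ a ^ (-p) :=
  Real.rpow_le_rpow_of_nonpos ha hax (neg_nonpos.mpr hp)

/-- Integrability of negative powers of the japanese bracket. -/
lemma jap_lintegral_lt_top {s : ℝ} (hs : 3 < s) :
    ∫⁻ y : E3, ENNReal.ofReal (jap y ^ (-s)) < ⊤ := by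
  have hfin : (Module.finrank ℝ E3 : ℝ) < s := by simpa using hs
  have hint := integrable_rpow_neg_one_add_norm_sq (μ := (volume : Measure E3)) hfin
  have heq : ∀ y : E3, jap y ^ (-s) = (1 + ‖y‖ ^ 2) ^ (-s / 2) := by
    intro y
    rw [jap, show Real.sqrt (1 + ‖y‖^2) = (1 + ‖y‖^2) ^ (1/2 : ℝ) from
      Real.sqrt_eq_rpow _, ← Real.rpow_mul (by positivity)]
    ring_nf
  simp_rw [heq]
  exact hint.lintegral_lt_top

/-- `phi β z = ‖z‖ ^ (-β)` as an extended nonneg real. -/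
def phi (β : ℝ) (z : E3) : ℝ≥0∞ := ENNReal.ofReal (‖z‖ ^ (-β))

lemma measurable_phi (β : ℝ) : Measurable (phi β) := by
  unfold phi; fun_prop

lemma finrank_E3 : Module.finrank ℝ E3 = 3 := by simp

lemma pow_rpow_comm {x : ℝ} (hx : 0 ≤ x) (n : ℕ) (y : ℝ) : (x ^ n) ^ y = (x ^ y) ^ n := by
  rw [← Real.rpow_natCast x n, ← Real.rpow_mul hx, ← Real.rpow_natCast (x ^ y) n,
    ← Real.rpow_mul hx, mul_comm]

/-- Finiteness of the unit-ball integral of `‖z‖^(-β)` for `0 < β < 3`, via dyadic shells. -/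
lemma K0_one_lt_top {β : ℝ} (hβ0 : 0 < β) (hβ3 : β < 3) :
    ∫⁻ z in closedBall (0:E3) 1, phi β z < ⊤ := by
  set μ := (volume : Measure E3) with hμ
  set A : ℕ → Set E3 := fun k => {z | (2:ℝ)⁻¹ ^ (k+1) ≤ ‖z‖ ∧ ‖z‖ ≤ (2:ℝ)⁻¹ ^ k} with hA
  have hcover : closedBall (0:E3) 1 ⊆ {0} ∪ ⋃ k, A k := by
    intro z hz
    rcases eq_or_ne z 0 with rfl | hz0
    · exact Or.inl rfl
    right
    have hz1 : ‖z‖ ≤ 1 := by simpa [dist_eq_norm] using hz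
    have hzpos : 0 < ‖z‖ := norm_pos_iff.mpr hz0
    have hex : ∃ k : ℕ, (2:ℝ)⁻¹ ^ (k+1) ≤ ‖z‖ := by
      obtain ⟨k, hk⟩ := exists_pow_lt_of_lt_one hzpos (by norm_num : (2:ℝ)⁻¹ < 1)
      exact ⟨k, le_of_lt (lt_of_le_of_lt (pow_le_pow_of_le_one (by norm_num)
        (by norm_num) (Nat.le_succ k)) hk)⟩
    classical
    refine mem_iUnion.mpr ⟨Nat.find hex, Nat.find_spec hex, ?_⟩
    rcases Nat.eq_zero_or_pos (Nat.find hex) with hk0 | hkpos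
    · rw [hk0]; simpa using hz1
    · have hnot := Nat.find_min hex (m := Nat.find hex - 1) (by omega)
      push_neg at hnot
      have heq : Nat.find hex - 1 + 1 = Nat.find hex := by omega
      rw [heq] at hnot
      exact hnot.le
  have hsingle : ∫⁻ z in ({0} : Set E3), phi β z ∂μ = 0 :=
    setLIntegral_measure_zero _ _ (by simp)
  set V := μ (ball (0:E3) 1) with hV
  have hVlt : V < ⊤ := measure_ball_lt_top
  set c := (2:ℝ) ^ β with hc
  have hc0 : 0 < c := Real.rpow_pos_of_pos (by norm_num) _
  have hterm : ∀ k : ℕ, ∫⁻ z in A k, phi β z ∂μ ≤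
      (ENNReal.ofReal c * V) * (ENNReal.ofReal (c / 8)) ^ k := by
    intro k
    have hAm : MeasurableSet (A k) := by
      apply MeasurableSet.inter
      · exact measurableSet_le measurable_const measurable_norm
      · exact measurableSet_le measurable_norm measurable_const
    have hb : (0:ℝ) < (2:ℝ)⁻¹ ^ (k+1) := by positivity
    have hbound : ∀ z ∈ A k, phi β z ≤ ENNReal.ofReal (c ^ (k+1)) := by
      intro z hz
      have h1 : ((2:ℝ)⁻¹ ^ (k+1)) ^ (-β) = c ^ (k+1) := by
        rw [pow_rpow_comm (by norm_num) (k+1) (-β), hc]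
        congr 1
        rw [Real.inv_rpow (by norm_num), Real.rpow_neg (by norm_num), inv_inv]
      have h2 : ‖z‖ ^ (-β) ≤ ((2:ℝ)⁻¹ ^ (k+1)) ^ (-β) :=
        Real.rpow_le_rpow_of_nonpos hb hz.1 (by linarith)
      exact ENNReal.ofReal_le_ofReal (h1 ▸ h2)
    have hsub : A k ⊆ closedBall (0:E3) ((2:ℝ)⁻¹ ^ k) := by
      intro z hz
      simpa [dist_eq_norm] using hz.2
    calc ∫⁻ z in A k, phi β z ∂μ ≤ ∫⁻ _ in A k, ENNReal.ofReal (c ^ (k+1)) ∂μ :=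
          setLIntegral_mono' hAm hbound
      _ = ENNReal.ofReal (c ^ (k+1)) * μ (A k) := setLIntegral_const _ _
      _ ≤ ENNReal.ofReal (c ^ (k+1)) * μ (closedBall (0:E3) ((2:ℝ)⁻¹ ^ k)) := by
          exact mul_le_mul_right (measure_mono hsub) _
      _ = ENNReal.ofReal (c ^ (k+1)) *
            (ENNReal.ofReal (((2:ℝ)⁻¹ ^ k) ^ Module.finrank ℝ E3) * V) := by
          rw [Measure.addHaar_closedBall μ _ (by positivity)]
      _ = ENNReal.ofReal (c ^ (k+1) * ((2:ℝ)⁻¹ ^ k) ^ Module.finrank ℝ E3) * V := by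
          rw [← mul_assoc, ← ENNReal.ofReal_mul (by positivity)]
      _ = (ENNReal.ofReal c * V) * (ENNReal.ofReal (c / 8)) ^ k := by
          rw [finrank_E3, ← ENNReal.ofReal_pow (by positivity), mul_right_comm,
            ← ENNReal.ofReal_mul (by positivity)]
          congr 2
          have h8 : ((2:ℝ)⁻¹ ^ k) ^ 3 = (8:ℝ)⁻¹ ^ k := by
            rw [← pow_mul, mul_comm, pow_mul]; norm_num
          rw [h8, pow_succ, div_pow, inv_pow]
          field_simp
  have hq : ENNReal.ofReal (c / 8) < 1 := by
    rw [← ENNReal.ofReal_one]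
    apply ENNReal.ofReal_lt_ofReal_iff_of_nonneg (by positivity) |>.mpr
    have : c < 8 := by
      have : (2:ℝ) ^ β < (2:ℝ) ^ (3:ℝ) :=
        Real.rpow_lt_rpow_of_exponent_lt (by norm_num) hβ3
      calc c < (2:ℝ) ^ (3:ℝ) := this
        _ = 8 := by
          rw [show (3:ℝ) = ((3:ℕ):ℝ) by norm_num, Real.rpow_natCast]; norm_num
    linarith
  calc ∫⁻ z in closedBall (0:E3) 1, phi β z ∂μ
      ≤ ∫⁻ z in ({0} : Set E3) ∪ ⋃ k, A k, phi β z ∂μ := lintegral_mono_set hcover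
    _ ≤ (∫⁻ z in ({0} : Set E3), phi β z ∂μ) + ∫⁻ z in ⋃ k, A k, phi β z ∂μ :=
        lintegral_union_le _ _ _
    _ ≤ 0 + ∑' k, ∫⁻ z in A k, phi β z ∂μ := by
        rw [hsingle]; exact add_le_add le_rfl (lintegral_iUnion_le _ _)
    _ ≤ ∑' k, (ENNReal.ofReal c * V) * (ENNReal.ofReal (c / 8)) ^ k := by
        rw [zero_add]; exact ENNReal.tsum_le_tsum hterm
    _ = (ENNReal.ofReal c * V) * (1 - ENNReal.ofReal (c / 8))⁻¹ := by
        rw [ENNReal.tsum_mul_left, ENNReal.tsum_geometric]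
    _ < ⊤ := by
        apply ENNReal.mul_lt_top
        · exact ENNReal.mul_lt_top ENNReal.ofReal_lt_top hVlt
        · rw [lt_top_iff_ne_top]
          apply ENNReal.inv_ne_top.mpr
          rw [ne_eq, tsub_eq_zero_iff_le]
          exact fun h => absurd (lt_of_lt_of_le hq h) (lt_irrefl _)

lemma K0_scale {β : ℝ} (hβ0 : 0 ≤ β) {R : ℝ} (hR : 0 < R) :
    ∫⁻ z in closedBall (0:E3) R, phi β z =
      ENNReal.ofReal (R ^ (3 - β)) * ∫⁻ z in closedBall (0:E3) 1, phi β z := by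
  set μ := (volume : Measure E3)
  set f : E3 → ℝ≥0∞ := (closedBall (0:E3) R).indicator (phi β) with hf
  have hfm : Measurable f := (measurable_phi β).indicator measurableSet_closedBall
  have h1 : ∫⁻ z in closedBall (0:E3) R, phi β z ∂μ = ∫⁻ z, f z ∂μ :=
    (lintegral_indicator measurableSet_closedBall _).symm
  have hsm : Measurable fun z : E3 => R • z := by fun_prop
  have hmap : ∫⁻ z, f (R • z) ∂μ = ENNReal.ofReal |(R ^ 3)⁻¹| * ∫⁻ z, f z ∂μ := by
    rw [← lintegral_map hfm hsm, Measure.map_addHaar_smul μ hR.ne', finrank_E3,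
      lintegral_smul_measure, smul_eq_mul]
  have hcomp : ∀ z : E3, f (R • z) =
      ENNReal.ofReal (R ^ (-β)) * (closedBall (0:E3) 1).indicator (phi β) z := by
    intro z
    by_cases hz : z ∈ closedBall (0:E3) 1
    · have hz' : R • z ∈ closedBall (0:E3) R := by
        simp only [mem_closedBall, dist_zero_right] at hz ⊢
        rw [norm_smul, Real.norm_eq_abs, abs_of_pos hR]
        calc R * ‖z‖ ≤ R * 1 := by nlinarith
          _ = R := mul_one R
      rw [hf, indicator_of_mem hz', indicator_of_mem hz, phi, phi,
        ← ENNReal.ofReal_mul (by positivity)]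
      congr 1
      rw [norm_smul, Real.norm_eq_abs, abs_of_pos hR,
        Real.mul_rpow hR.le (norm_nonneg z)]
    · have hz' : R • z ∉ closedBall (0:E3) R := by
        simp only [mem_closedBall, dist_zero_right] at hz ⊢
        push_neg at hz ⊢
        rw [norm_smul, Real.norm_eq_abs, abs_of_pos hR]
        nlinarith
      rw [hf, indicator_of_notMem hz', indicator_of_notMem hz, mul_zero]
  have h2 : ∫⁻ z, f (R • z) ∂μ =
      ENNReal.ofReal (R ^ (-β)) * ∫⁻ z in closedBall (0:E3) 1, phi β z ∂μ := by
    simp_rw [hcomp]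
    rw [lintegral_const_mul' _ _ ENNReal.ofReal_ne_top,
      lintegral_indicator measurableSet_closedBall]
  -- combine
  have hA : ENNReal.ofReal |(R ^ 3)⁻¹| ≠ 0 := by
    simp only [ne_eq, ENNReal.ofReal_eq_zero, not_le, abs_pos]
    positivity
  have key : ∫⁻ z, f z ∂μ = ENNReal.ofReal (R ^ 3) * ∫⁻ z, f (R • z) ∂μ := by
    rw [hmap, ← mul_assoc, ← ENNReal.ofReal_mul (by positivity)]
    rw [abs_of_pos (by positivity : (0:ℝ) < (R ^ 3)⁻¹), mul_inv_cancel₀ (by positivity)]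
    simp
  rw [h1, key, h2, ← mul_assoc, ← ENNReal.ofReal_mul (by positivity)]
  congr 2
  rw [← Real.rpow_natCast R 3, ← Real.rpow_add hR]
  norm_num [sub_eq_add_neg]

lemma measurable_japc (c : ℝ) : Measurable fun x : E3 => ENNReal.ofReal (jap x ^ c) := by
  unfold jap; fun_prop

lemma half_rpow {a : ℝ} (ha : 0 ≤ a) (c : ℝ) : (a / 2) ^ (-c) = 2 ^ c * a ^ (-c) := by
  rw [Real.div_rpow ha (by norm_num), Real.rpow_neg (by norm_num : (0:ℝ) ≤ 2),
    div_eq_mul_inv, inv_inv]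
  ring

lemma rpow_merge {t : ℝ} (ht : 0 < t) (p q : ℝ) :
    ENNReal.ofReal (t ^ p) * ENNReal.ofReal (t ^ q) = ENNReal.ofReal (t ^ (p + q)) := by
  rw [← ENNReal.ofReal_mul (Real.rpow_nonneg ht.le _), ← Real.rpow_add ht]

theorem finiteness' {a b β β₁ β₂ : ℝ} (hb0 : 0 ≤ b)
    (hsplit : β = β₁ + β₂) (hb1 : 0 ≤ β₁) (hb2 : 0 ≤ β₂)
    (hβ0 : 0 < β) (hβ3 : β < 3)
    (hp1 : 3 < 2*a + 2*b + β - 3)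
    (hp2 : 3 < 2*a + β₁)
    (hp3 : 3 < 2*b + β₂) :
    ∫⁻ x : E3, ∫⁻ y : E3,
      ENNReal.ofReal (jap x ^ (-(2*a)) * (‖x - y‖ ^ (-β) * jap y ^ (-(2*b)))) < ⊤ := by
  set K1 := ∫⁻ z in closedBall (0:E3) 1, phi β z with hK1
  have hK1lt : K1 < ⊤ := K0_one_lt_top hβ0 hβ3
  set M := ∫⁻ y : E3, ENNReal.ofReal ((jap y / 2) ^ (-β₂) * jap y ^ (-(2*b))) with hM
  have hMlt : M < ⊤ := by
    have hpt : ∀ y : E3, ENNReal.ofReal ((jap y / 2) ^ (-β₂) * jap y ^ (-(2*b)))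
        = ENNReal.ofReal (2 ^ β₂) * ENNReal.ofReal (jap y ^ (-(β₂ + 2*b))) := by
      intro y
      rw [half_rpow (jap_pos y).le, mul_assoc, ← Real.rpow_add (jap_pos y),
        ENNReal.ofReal_mul (Real.rpow_nonneg (by norm_num) _)]
      ring_nf
    rw [hM]
    simp_rw [hpt]
    rw [lintegral_const_mul' _ _ ENNReal.ofReal_ne_top]
    exact ENNReal.mul_lt_top ENNReal.ofReal_lt_top (jap_lintegral_lt_top (by linarith))
  -- inner estimate
  have hinner : ∀ x : E3, (∫⁻ y : E3, ENNReal.ofReal (‖x - y‖ ^ (-β) * jap y ^ (-(2*b)))) ≤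
      ENNReal.ofReal (2 ^ (2*b)) * K1 * ENNReal.ofReal (jap x ^ (3 - β - 2*b))
        + ENNReal.ofReal (2 ^ β₁) * M * ENNReal.ofReal (jap x ^ (-β₁)) := by
    intro x
    have hR : 0 < jap x := jap_pos x
    set R := jap x with hRdef
    have hR2 : (0:ℝ) < R / 2 := by positivity
    set H1 : E3 → ℝ≥0∞ := (closedBall x R).indicator
      (fun y => ENNReal.ofReal ((R/2) ^ (-(2*b)) * ‖x - y‖ ^ (-β))) with hH1
    set H2 : E3 → ℝ≥0∞ := fun y =>
      ENNReal.ofReal ((R/2) ^ (-β₁) * ((jap y / 2) ^ (-β₂) * jap y ^ (-(2*b)))) with hH2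
    have hpt : ∀ y : E3, ENNReal.ofReal (‖x - y‖ ^ (-β) * jap y ^ (-(2*b))) ≤ H1 y + H2 y := by
      intro y
      have hJy : 0 < jap y := jap_pos y
      by_cases hcase : ‖x - y‖ ≤ R/2 ∨ ‖x - y‖ ≤ jap y / 2
      · -- region I
        have hyx : ‖y - x‖ = ‖x - y‖ := norm_sub_rev _ _
        have hxy_le : ‖x - y‖ ≤ R := by
          rcases hcase with h | h
          · linarith
          · have := jap_lip y x; rw [hyx] at this; linarith
        have hy_ge : R / 2 ≤ jap y := by
          rcases hcase with h | h
          · have := jap_lip x y; linarith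
          · have := jap_lip x y; linarith
        have hmem : y ∈ closedBall x R := by
          rw [mem_closedBall, dist_eq_norm, hyx]; exact hxy_le
        have hle : ENNReal.ofReal (‖x - y‖ ^ (-β) * jap y ^ (-(2*b))) ≤ H1 y := by
          rw [hH1, indicator_of_mem hmem]
          apply ENNReal.ofReal_le_ofReal
          rw [mul_comm ((R/2) ^ (-(2*b)))]
          apply mul_le_mul_of_nonneg_left _ (Real.rpow_nonneg (norm_nonneg _) _)
          exact Real.rpow_le_rpow_of_nonpos hR2 hy_ge (by linarith)
        exact le_trans hle (self_le_add_right _ _)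
      · -- region II
        push_neg at hcase
        obtain ⟨h1, h2⟩ := hcase
        have hrpos : (0:ℝ) < ‖x - y‖ := lt_trans hR2 h1
        have hsplit' : ‖x - y‖ ^ (-β) = ‖x - y‖ ^ (-β₁) * ‖x - y‖ ^ (-β₂) := by
          rw [← Real.rpow_add hrpos]; rw [hsplit]; ring_nf
        have hle : ENNReal.ofReal (‖x - y‖ ^ (-β) * jap y ^ (-(2*b))) ≤ H2 y := by
          rw [hH2]
          apply ENNReal.ofReal_le_ofReal
          rw [hsplit', mul_assoc]
          apply mul_le_mul
          · exact Real.rpow_le_rpow_of_nonpos hR2 h1.le (by linarith)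
          · apply mul_le_mul_of_nonneg_right _ (Real.rpow_nonneg hJy.le _)
            exact Real.rpow_le_rpow_of_nonpos (by linarith) h2.le (by linarith)
          · exact mul_nonneg (Real.rpow_nonneg (norm_nonneg _) _) (Real.rpow_nonneg hJy.le _)
          · exact Real.rpow_nonneg hR2.le _
        exact le_trans hle (le_add_self)
    have hm1 : Measurable H1 := by
      apply Measurable.indicator _ measurableSet_closedBall
      fun_prop
    calc (∫⁻ y : E3, ENNReal.ofReal (‖x - y‖ ^ (-β) * jap y ^ (-(2*b))))
        ≤ ∫⁻ y : E3, (H1 y + H2 y) := lintegral_mono hpt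
      _ = (∫⁻ y : E3, H1 y) + ∫⁻ y : E3, H2 y := lintegral_add_left hm1 _
      _ ≤ _ := by
          apply add_le_add
          · -- H1 piece
            have e1 : (∫⁻ y : E3, H1 y) = ENNReal.ofReal ((R/2) ^ (-(2*b))) *
                ∫⁻ y in closedBall x R, ENNReal.ofReal (‖x - y‖ ^ (-β)) := by
              rw [hH1, lintegral_indicator measurableSet_closedBall]
              rw [← lintegral_const_mul' _ _ ENNReal.ofReal_ne_top]
              congr 1; funext y
              rw [← ENNReal.ofReal_mul (Real.rpow_nonneg hR2.le _)]
            have e2 : (∫⁻ y in closedBall x R, ENNReal.ofReal (‖x - y‖ ^ (-β)))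
                = ∫⁻ z in closedBall (0:E3) R, phi β z := by
              have e2a : (∫⁻ y in closedBall x R, ENNReal.ofReal (‖x - y‖ ^ (-β)))
                  = ∫⁻ y : E3, ((closedBall (0:E3) R).indicator (phi β)) (y - x) := by
                rw [← lintegral_indicator measurableSet_closedBall]
                congr 1; funext y
                by_cases hy : y ∈ closedBall x R
                · have hy' : y - x ∈ closedBall (0:E3) R := by
                    rw [mem_closedBall, dist_eq_norm, sub_zero]
                    rw [mem_closedBall, dist_eq_norm] at hy
                    exact hy
                  rw [indicator_of_mem hy, indicator_of_mem hy']
                  unfold phi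
                  rw [norm_sub_rev]
                · have hy' : y - x ∉ closedBall (0:E3) R := by
                    rw [mem_closedBall, dist_eq_norm, sub_zero]
                    rw [mem_closedBall, dist_eq_norm] at hy
                    exact hy
                  rw [indicator_of_notMem hy, indicator_of_notMem hy']
              rw [e2a, lintegral_sub_right_eq_self ((closedBall (0:E3) R).indicator (phi β)) x,
                lintegral_indicator measurableSet_closedBall]
            rw [e1, e2, K0_scale (by linarith) hR, ← hK1]
            rw [half_rpow hR.le, ENNReal.ofReal_mul (Real.rpow_nonneg (by norm_num) _)]
            rw [show ENNReal.ofReal (2 ^ (2*b)) * ENNReal.ofReal (R ^ (-(2*b))) *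
                (ENNReal.ofReal (R ^ (3 - β)) * K1)
              = ENNReal.ofReal (2 ^ (2*b)) * K1 *
                (ENNReal.ofReal (R ^ (-(2*b))) * ENNReal.ofReal (R ^ (3 - β))) by ring]
            rw [rpow_merge hR]
            apply le_of_eq
            congr 2
            ring
          · -- H2 piece
            have e3 : (∫⁻ y : E3, H2 y) = ENNReal.ofReal ((R/2) ^ (-β₁)) * M := by
              rw [hH2, hM, ← lintegral_const_mul' _ _ ENNReal.ofReal_ne_top]
              congr 1; funext y
              rw [← ENNReal.ofReal_mul (Real.rpow_nonneg hR2.le _)]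
            rw [e3, half_rpow hR.le, ENNReal.ofReal_mul (Real.rpow_nonneg (by norm_num) _)]
            apply le_of_eq
            ring
    -- end hinner
  -- outer
  have houter : ∀ x : E3,
      (∫⁻ y : E3, ENNReal.ofReal (jap x ^ (-(2*a)) * (‖x - y‖ ^ (-β) * jap y ^ (-(2*b)))))
      ≤ ENNReal.ofReal (2 ^ (2*b)) * K1 * ENNReal.ofReal (jap x ^ (-(2*a + 2*b + β - 3)))
        + ENNReal.ofReal (2 ^ β₁) * M * ENNReal.ofReal (jap x ^ (-(2*a + β₁))) := by
    intro x
    have hsplit2 : ∀ y : E3, ENNReal.ofReal (jap x ^ (-(2*a)) * (‖x - y‖ ^ (-β) * jap y ^ (-(2*b))))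
        = ENNReal.ofReal (jap x ^ (-(2*a))) * ENNReal.ofReal (‖x - y‖ ^ (-β) * jap y ^ (-(2*b))) := by
      intro y
      rw [← ENNReal.ofReal_mul (Real.rpow_nonneg (jap_pos x).le _)]
    simp_rw [hsplit2]
    rw [lintegral_const_mul' _ _ ENNReal.ofReal_ne_top]
    calc ENNReal.ofReal (jap x ^ (-(2*a))) *
          ∫⁻ y : E3, ENNReal.ofReal (‖x - y‖ ^ (-β) * jap y ^ (-(2*b)))
        ≤ ENNReal.ofReal (jap x ^ (-(2*a))) *
          (ENNReal.ofReal (2 ^ (2*b)) * K1 * ENNReal.ofReal (jap x ^ (3 - β - 2*b))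
            + ENNReal.ofReal (2 ^ β₁) * M * ENNReal.ofReal (jap x ^ (-β₁))) :=
          mul_le_mul_right (hinner x) _
      _ = _ := by
          rw [mul_add]
          congr 1
          · rw [show ENNReal.ofReal (jap x ^ (-(2*a))) *
                (ENNReal.ofReal (2 ^ (2*b)) * K1 * ENNReal.ofReal (jap x ^ (3 - β - 2*b)))
              = ENNReal.ofReal (2 ^ (2*b)) * K1 *
                (ENNReal.ofReal (jap x ^ (-(2*a))) * ENNReal.ofReal (jap x ^ (3 - β - 2*b))) by ring,
              rpow_merge (jap_pos x)]
            congr 2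
            ring
          · rw [show ENNReal.ofReal (jap x ^ (-(2*a))) *
                (ENNReal.ofReal (2 ^ β₁) * M * ENNReal.ofReal (jap x ^ (-β₁)))
              = ENNReal.ofReal (2 ^ β₁) * M *
                (ENNReal.ofReal (jap x ^ (-(2*a))) * ENNReal.ofReal (jap x ^ (-β₁))) by ring,
              rpow_merge (jap_pos x)]
            congr 2
            ring
  calc ∫⁻ x : E3, ∫⁻ y : E3,
        ENNReal.ofReal (jap x ^ (-(2*a)) * (‖x - y‖ ^ (-β) * jap y ^ (-(2*b))))
      ≤ ∫⁻ x : E3,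
        (ENNReal.ofReal (2 ^ (2*b)) * K1 * ENNReal.ofReal (jap x ^ (-(2*a + 2*b + β - 3)))
          + ENNReal.ofReal (2 ^ β₁) * M * ENNReal.ofReal (jap x ^ (-(2*a + β₁)))) :=
        lintegral_mono houter
    _ = ENNReal.ofReal (2 ^ (2*b)) * K1 *
          (∫⁻ x : E3, ENNReal.ofReal (jap x ^ (-(2*a + 2*b + β - 3))))
        + ENNReal.ofReal (2 ^ β₁) * M *
          (∫⁻ x : E3, ENNReal.ofReal (jap x ^ (-(2*a + β₁)))) := by
        rw [lintegral_add_left (by exact ((measurable_japc _).const_mul _))]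
        rw [lintegral_const_mul' _ _ (by
          exact ENNReal.mul_ne_top ENNReal.ofReal_ne_top hK1lt.ne)]
        rw [lintegral_const_mul' _ _ (by
          exact ENNReal.mul_ne_top ENNReal.ofReal_ne_top hMlt.ne)]
    _ < ⊤ := by
        apply ENNReal.add_lt_top.mpr
        constructor
        · exact ENNReal.mul_lt_top (ENNReal.mul_lt_top ENNReal.ofReal_lt_top hK1lt)
            (jap_lintegral_lt_top hp1)
        · exact ENNReal.mul_lt_top (ENNReal.mul_lt_top ENNReal.ofReal_lt_top hMlt)
            (jap_lintegral_lt_top hp2)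

lemma exp_norm_bound (t : ℝ) (ht : 0 ≤ t) :
    ‖Complex.exp (Complex.I * t) - 1‖ ≤ 2 * min 1 t := by
  rcases le_total t 1 with h | h
  · have habs : ‖Complex.I * t‖ = t := by
      rw [norm_mul, Complex.norm_I, one_mul, Complex.norm_real, Real.norm_eq_abs, abs_of_nonneg ht]
    have h2 := Complex.norm_exp_sub_one_le (x := Complex.I * t) (by rw [habs]; exact h)
    rw [habs] at h2
    rw [min_eq_right h]
    exact h2
  · rw [min_eq_left h]
    have hno : ‖Complex.exp (Complex.I * t)‖ = 1 := by
      rw [Complex.norm_exp]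
      simp
    calc ‖Complex.exp (Complex.I * t) - 1‖ ≤ ‖Complex.exp (Complex.I * t)‖ + ‖(1:ℂ)‖ :=
          norm_sub_le _ _
      _ = 2 * 1 := by rw [hno]; norm_num

lemma min_le_rpow {t ε : ℝ} (ht : 0 ≤ t) (hε0 : 0 < ε) (hε1 : ε ≤ 1) : min 1 t ≤ t ^ ε := by
  rcases le_total t 1 with h | h
  · rw [min_eq_right h]
    rcases eq_or_lt_of_le ht with h0 | h0
    · rw [← h0, Real.zero_rpow hε0.ne']
    · calc t = t ^ (1:ℝ) := (Real.rpow_one t).symm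
        _ ≤ t ^ ε := Real.rpow_le_rpow_of_exponent_ge h0 h hε1
  · rw [min_eq_left h]
    calc (1:ℝ) = 1 ^ ε := (Real.one_rpow ε).symm
      _ ≤ t ^ ε := Real.rpow_le_rpow (by norm_num) h hε0.le

lemma hpoint {σ' α' ε : ℝ} (hε0 : 0 < ε) (hε1 : ε < 1) {l : ℝ} (hl : 0 ≤ l) (x y : E3) :
    ENNReal.ofReal (jap x ^ (-(2:ℝ) * σ') *
        (‖Complex.exp (Complex.I * ((l * ‖x - y‖ : ℝ) : ℂ)) - 1‖ ^ 2 / ‖x - y‖ ^ 2) *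
        jap y ^ (-(2:ℝ) * α'))
      ≤ ENNReal.ofReal (4 * l ^ (2*ε)) *
        ENNReal.ofReal (jap x ^ (-(2*σ')) * (‖x - y‖ ^ (-(2 - 2*ε)) * jap y ^ (-(2*α')))) := by
  rw [← ENNReal.ofReal_mul (by positivity)]
  apply ENNReal.ofReal_le_ofReal
  have hA : (0:ℝ) ≤ jap x ^ (-(2:ℝ) * σ') := Real.rpow_nonneg (jap_pos x).le _
  have hB : (0:ℝ) ≤ jap y ^ (-(2:ℝ) * α') := Real.rpow_nonneg (jap_pos y).le _
  have hr : (0:ℝ) ≤ ‖x - y‖ := norm_nonneg _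
  have hQ : ‖Complex.exp (Complex.I * ((l * ‖x - y‖ : ℝ) : ℂ)) - 1‖ ^ 2 / ‖x - y‖ ^ 2
      ≤ 4 * l ^ (2*ε) * ‖x - y‖ ^ (-(2 - 2*ε)) := by
    rcases eq_or_lt_of_le hr with h0 | h0
    · rw [← h0]
      rw [Real.zero_rpow (by intro h; rw [neg_eq_zero] at h; linarith)]
      norm_num
    · set r := ‖x - y‖
      set t := l * r with htdef
      have ht : 0 ≤ t := mul_nonneg hl h0.le
      have h1 : ‖Complex.exp (Complex.I * (t:ℂ)) - 1‖ ≤ 2 * t ^ ε :=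
        le_trans (exp_norm_bound t ht)
          (mul_le_mul_of_nonneg_left (min_le_rpow ht hε0 hε1.le) (by norm_num))
      have h2 : ‖Complex.exp (Complex.I * (t:ℂ)) - 1‖ ^ 2 ≤ (2 * t ^ ε) ^ 2 :=
        pow_le_pow_left₀ (norm_nonneg _) h1 2
      have h3 : (2 * t ^ ε) ^ 2 = 4 * t ^ (2*ε) := by
        rw [mul_pow, ← Real.rpow_natCast (t ^ ε) 2, ← Real.rpow_mul ht]
        norm_num
        rw [mul_comm ε 2]
      have h4 : t ^ (2*ε) = l ^ (2*ε) * r ^ (2*ε) := Real.mul_rpow hl h0.le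
      have h5 : r ^ (2*ε) / r ^ 2 = r ^ (-(2 - 2*ε)) := by
        rw [← Real.rpow_natCast r 2, ← Real.rpow_sub h0]
        congr 1
        push_cast
        ring
      calc ‖Complex.exp (Complex.I * (t:ℂ)) - 1‖ ^ 2 / r ^ 2
          ≤ (4 * (l ^ (2*ε) * r ^ (2*ε))) / r ^ 2 := by
            apply div_le_div_of_nonneg_right ?_ (by positivity)
            · rw [← h4, ← h3]; exact h2
        _ = 4 * l ^ (2*ε) * (r ^ (2*ε) / r ^ 2) := by ring
        _ = 4 * l ^ (2*ε) * r ^ (-(2 - 2*ε)) := by rw [h5]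
  have e1 : jap x ^ (-(2:ℝ) * σ') = jap x ^ (-(2*σ')) := by norm_num
  have e2 : jap y ^ (-(2:ℝ) * α') = jap y ^ (-(2*α')) := by norm_num
  calc jap x ^ (-(2:ℝ) * σ') *
        (‖Complex.exp (Complex.I * ((l * ‖x - y‖ : ℝ) : ℂ)) - 1‖ ^ 2 / ‖x - y‖ ^ 2) *
        jap y ^ (-(2:ℝ) * α')
      ≤ jap x ^ (-(2:ℝ) * σ') * (4 * l ^ (2*ε) * ‖x - y‖ ^ (-(2 - 2*ε))) *
        jap y ^ (-(2:ℝ) * α') :=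
        mul_le_mul_of_nonneg_right (mul_le_mul_of_nonneg_left hQ hA) hB
    _ = 4 * l ^ (2*ε) * (jap x ^ (-(2*σ')) * (‖x - y‖ ^ (-(2 - 2*ε)) * jap y ^ (-(2*α')))) := by
        rw [← e1, ← e2]; ring

end S11

open S11 Real Set Metric Filter
open scoped ENNReal NNReal

theorem stmt_11 (σ α : ℝ) (hσ : 1 / 2 < σ) (hα : 1 / 2 < α) (hσα : 2 < σ + α) :
    Filter.Tendsto
      (fun l : ℝ => ∫⁻ x : E3, ∫⁻ y : E3,
        ENNReal.ofReal (jap x ^ (-(2 : ℝ) * σ) *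
          (‖Complex.exp (Complex.I * ((l * ‖x - y‖ : ℝ) : ℂ)) - 1‖ ^ 2 / ‖x - y‖ ^ 2) *
          jap y ^ (-(2 : ℝ) * α)))
      (nhdsWithin 0 (Set.Ioi 0)) (nhds 0) := by
  -- choice of exponents
  obtain ⟨ε, β₁, β₂, hε0, hb1, hb2, hsum, hβ0, hβ3, hp1, hp2, hp3⟩ :
      ∃ ε β₁ β₂ : ℝ, 0 < ε ∧ 0 ≤ β₁ ∧ 0 ≤ β₂ ∧
        2 - 2*ε = β₁ + β₂ ∧ 0 < 2 - 2*ε ∧ 2 - 2*ε < 3 ∧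
        3 < 2*σ + 2*α + (2 - 2*ε) - 3 ∧ 3 < 2*σ + β₁ ∧ 3 < 2*α + β₂ := by
    refine ⟨(2 - (max (3-2*σ) 0 + max (3-2*α) 0))/4,
      max (3-2*σ) 0 + (2 - (max (3-2*σ) 0 + max (3-2*α) 0))/4,
      max (3-2*α) 0 + (2 - (max (3-2*σ) 0 + max (3-2*α) 0))/4, ?_⟩
    rcases max_cases (3-2*σ) 0 with ⟨e1, h1⟩ | ⟨e1, h1⟩ <;>
      rcases max_cases (3-2*α) 0 with ⟨e2, h2⟩ | ⟨e2, h2⟩ <;>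
      rw [e1, e2] <;>
      exact ⟨by linarith, by linarith, by linarith, by ring, by linarith, by linarith,
        by linarith, by linarith, by linarith⟩
  have hε1 : ε < 1 := by linarith
  have hC := finiteness' (a := σ) (b := α) (β := 2 - 2*ε) (β₁ := β₁) (β₂ := β₂)
    (by linarith) hsum hb1 hb2 hβ0 hβ3 hp1 hp2 hp3
  set C := ∫⁻ x : E3, ∫⁻ y : E3,
      ENNReal.ofReal (jap x ^ (-(2*σ)) * (‖x - y‖ ^ (-(2 - 2*ε)) * jap y ^ (-(2*α)))) with hCdef
  -- upper bound function
  have hbound : ∀ l : ℝ, l ∈ Ioi (0:ℝ) →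
      (∫⁻ x : E3, ∫⁻ y : E3,
        ENNReal.ofReal (jap x ^ (-(2 : ℝ) * σ) *
          (‖Complex.exp (Complex.I * ((l * ‖x - y‖ : ℝ) : ℂ)) - 1‖ ^ 2 / ‖x - y‖ ^ 2) *
          jap y ^ (-(2 : ℝ) * α)))
      ≤ ENNReal.ofReal (4 * l ^ (2*ε)) * C := by
    intro l hl
    calc (∫⁻ x : E3, ∫⁻ y : E3,
        ENNReal.ofReal (jap x ^ (-(2 : ℝ) * σ) *
          (‖Complex.exp (Complex.I * ((l * ‖x - y‖ : ℝ) : ℂ)) - 1‖ ^ 2 / ‖x - y‖ ^ 2) *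
          jap y ^ (-(2 : ℝ) * α)))
        ≤ ∫⁻ x : E3, ∫⁻ y : E3, ENNReal.ofReal (4 * l ^ (2*ε)) *
            ENNReal.ofReal (jap x ^ (-(2*σ)) * (‖x - y‖ ^ (-(2 - 2*ε)) * jap y ^ (-(2*α)))) :=
          lintegral_mono fun x => lintegral_mono fun y =>
            hpoint hε0 hε1 (le_of_lt (mem_Ioi.mp hl)) x y
      _ = ∫⁻ x : E3, ENNReal.ofReal (4 * l ^ (2*ε)) *
            ∫⁻ y : E3, ENNReal.ofReal (jap x ^ (-(2*σ)) *
              (‖x - y‖ ^ (-(2 - 2*ε)) * jap y ^ (-(2*α)))) := by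
          apply lintegral_congr
          intro x
          exact lintegral_const_mul' _ _ ENNReal.ofReal_ne_top
      _ = ENNReal.ofReal (4 * l ^ (2*ε)) * C := by
          rw [hCdef]
          exact lintegral_const_mul' _ _ ENNReal.ofReal_ne_top
  -- squeeze
  apply tendsto_of_tendsto_of_tendsto_of_le_of_le'
    (g := fun _ : ℝ => (0:ℝ≥0∞))
    (h := fun l : ℝ => ENNReal.ofReal (4 * l ^ (2*ε)) * C)
    tendsto_const_nhds
  · -- upper function tends to 0
    have h1 : Filter.Tendsto (fun l : ℝ => 4 * l ^ (2*ε)) (nhdsWithin 0 (Ioi 0)) (nhds 0) := by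
      have h2 : Filter.Tendsto (fun l : ℝ => l ^ (2*ε)) (nhds 0) (nhds 0) := by
        have h3 := (Real.continuousAt_rpow_const 0 (2*ε) (Or.inr (by linarith))).tendsto
        rwa [Real.zero_rpow (by linarith : 2*ε ≠ 0)] at h3
      have h4 := (h2.const_mul (4:ℝ)).mono_left
        (nhdsWithin_le_nhds (s := Ioi (0:ℝ)))
      simpa using h4
    have h5 : Filter.Tendsto (fun l : ℝ => ENNReal.ofReal (4 * l ^ (2*ε)))
        (nhdsWithin 0 (Ioi 0)) (nhds 0) := by
      have := (ENNReal.continuous_ofReal.tendsto 0).comp h1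
      simpa only [Function.comp_def, ENNReal.ofReal_zero] using this
    have h6 := ENNReal.Tendsto.mul_const h5 (Or.inr hC.ne)
    simpa using h6
  · exact Filter.Eventually.of_forall fun l => zero_le
  · filter_upwards [self_mem_nhdsWithin] with l hl
    exact hbound l hl
end
end

section
/- Let σ > 1/2, α > 1/2 and σ + α > 2, and let γ satisfy 0 < γ < min(σ + α − 2, σ − 1/2, α − 1/2, 1). Then there is a constant C, depending only on σ, α, γ, such that for every λ > 0: ∫_{ℝ³} ∫_{ℝ³} ⟨x⟩^{-2σ} min(λ, |x − y|^{-1})² ⟨y⟩^{-2α} dx dy ≤ C λ^{2γ}. -/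
open MeasureTheory

noncomputable section

open Metric Set ENNReal

namespace Stmt12Aux

lemma jap_one_le (x : E3) : 1 ≤ jap x := by
  rw [jap]
  nlinarith [Real.sq_sqrt (show (0:ℝ) ≤ 1+‖x‖^2 by positivity),
    Real.sqrt_nonneg (1+‖x‖^2), sq_nonneg ‖x‖]

lemma jap_pos (x : E3) : 0 < jap x := lt_of_lt_of_le one_pos (jap_one_le x)

lemma norm_le_jap (x : E3) : ‖x‖ ≤ jap x := by
  rw [jap]
  refine le_trans ?_ (Real.sqrt_le_sqrt (le_add_of_nonneg_left zero_le_one))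
  rw [Real.sqrt_sq (norm_nonneg x)]

lemma jap_le_one_add (x : E3) : jap x ≤ 1 + ‖x‖ := sqrt_one_add_norm_sq_le x

lemma div_rpow' {a k : ℝ} (ha : 0 < a) (hk : 0 < k) (t : ℝ) :
    (a / k) ^ t = a ^ t * k ^ (-t) := by
  rw [Real.div_rpow ha.le hk.le, Real.rpow_neg hk.le, div_eq_mul_inv]

def V3 : ℝ := (volume (ball (0:E3) 1)).toReal

lemma V3_nonneg : 0 ≤ V3 := ENNReal.toReal_nonneg

lemma vol_cb {r : ℝ} (hr : 0 ≤ r) :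
    volume (closedBall (0:E3) r) = ENNReal.ofReal (r ^ (3:ℕ) * V3) := by
  rw [Measure.addHaar_closedBall _ _ hr, ENNReal.ofReal_mul (by positivity), V3,
    ENNReal.ofReal_toReal measure_ball_lt_top.ne]
  congr 2
  simp

lemma step3 {s : Set E3} {r C : ℝ} (hr : 0 ≤ r) (hC : 0 ≤ C)
    (hs : s ⊆ closedBall 0 r) (f : E3 → ℝ) (hf : ∀ z ∈ s, f z ≤ C) :
    ∫⁻ z in s, ENNReal.ofReal (f z) ≤ ENNReal.ofReal (C * (r ^ (3:ℕ) * V3)) := by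
  calc ∫⁻ z in s, ENNReal.ofReal (f z)
      ≤ ∫⁻ _ in s, ENNReal.ofReal C :=
        setLIntegral_mono measurable_const fun z hz => ENNReal.ofReal_le_ofReal (hf z hz)
    _ = ENNReal.ofReal C * volume s := setLIntegral_const s _
    _ ≤ ENNReal.ofReal C * ENNReal.ofReal (r ^ (3:ℕ) * V3) := by
        gcongr
        rw [← vol_cb hr]; exact measure_mono hs
    _ = ENNReal.ofReal (C * (r ^ (3:ℕ) * V3)) := (ENNReal.ofReal_mul hC).symm

lemma tsum_ofReal_geo (A x : ℝ) (hA : 0 ≤ A) (hx0 : 0 ≤ x) (hx1 : x < 1) :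
    ∑' n : ℕ, ENNReal.ofReal (A * x ^ n) = ENNReal.ofReal (A * (1 - x)⁻¹) := by
  have h1 : ∀ n : ℕ, ENNReal.ofReal (A * x ^ n) = ENNReal.ofReal A * (ENNReal.ofReal x) ^ n := by
    intro n
    rw [ENNReal.ofReal_mul hA, ENNReal.ofReal_pow hx0]
  simp_rw [h1]
  rw [ENNReal.tsum_mul_left, ENNReal.tsum_geometric, ENNReal.ofReal_mul hA]
  congr 1
  rw [ENNReal.ofReal_inv_of_pos (by linarith), ENNReal.ofReal_sub _ hx0, ENNReal.ofReal_one]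

lemma calcA (V R p : ℝ) (hR : 0 < R) (n : ℕ) :
    (R / 2 ^ (n+1)) ^ (-p) * ((R / 2 ^ n) ^ (3:ℕ) * V)
      = (R ^ (3 - p) * 2 ^ p * V) * ((2:ℝ) ^ (p - 3)) ^ n := by
  have h2 : (0:ℝ) < 2 := two_pos
  have hpow : ∀ m : ℕ, (0:ℝ) < 2 ^ m := fun m => pow_pos h2 m
  have hd : ∀ m : ℕ, (0:ℝ) < R / 2 ^ m := fun m => div_pos hR (hpow m)
  have hlog : ∀ m : ℕ, Real.log (R / 2 ^ m) = Real.log R - m * Real.log 2 := by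
    intro m
    rw [Real.log_div hR.ne' (hpow m).ne', Real.log_pow]
  have e1 : (R / 2 ^ (n+1)) ^ (-p) = Real.exp ((Real.log R - (n+1) * Real.log 2) * (-p)) := by
    rw [Real.rpow_def_of_pos (hd (n+1)), hlog (n+1)]; push_cast; ring_nf
  have e2 : (R / 2 ^ n) ^ (3:ℕ) = Real.exp ((Real.log R - n * Real.log 2) * 3) := by
    rw [← Real.rpow_natCast (R / 2 ^ n) 3, Real.rpow_def_of_pos (hd n), hlog n]; norm_num
  have e3 : R ^ (3 - p) = Real.exp (Real.log R * (3 - p)) := Real.rpow_def_of_pos hR _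
  have e4 : (2:ℝ) ^ p = Real.exp (Real.log 2 * p) := Real.rpow_def_of_pos h2 _
  have e5 : ((2:ℝ) ^ (p - 3)) ^ n = Real.exp (Real.log 2 * ((p - 3) * n)) := by
    rw [← Real.rpow_natCast ((2:ℝ) ^ (p-3)) n, ← Real.rpow_mul h2.le, Real.rpow_def_of_pos h2]
  rw [e1, e2, e3, e4, e5]
  have comb : ∀ u v : ℝ, Real.exp u * (Real.exp v * V) = Real.exp (u + v) * V := by
    intro u v; rw [Real.exp_add]; ring
  have comb2 : ∀ u v w : ℝ,
      Real.exp u * Real.exp v * V * Real.exp w = Real.exp (u + v + w) * V := by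
    intro u v w; rw [Real.exp_add, Real.exp_add]; ring
  rw [comb, comb2]
  congr 2
  push_cast
  ring

lemma calcB (V R q : ℝ) (hR : 0 < R) (n : ℕ) :
    (R * 2 ^ n) ^ (-q) * ((R * 2 ^ (n+1)) ^ (3:ℕ) * V)
      = (R ^ (3 - q) * 2 ^ (3:ℝ) * V) * ((2:ℝ) ^ (3 - q)) ^ n := by
  have h2 : (0:ℝ) < 2 := two_pos
  have hpow : ∀ m : ℕ, (0:ℝ) < 2 ^ m := fun m => pow_pos h2 m
  have hd : ∀ m : ℕ, (0:ℝ) < R * 2 ^ m := fun m => mul_pos hR (hpow m)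
  have hlog : ∀ m : ℕ, Real.log (R * 2 ^ m) = Real.log R + m * Real.log 2 := by
    intro m
    rw [Real.log_mul hR.ne' (hpow m).ne', Real.log_pow]
  have e1 : (R * 2 ^ n) ^ (-q) = Real.exp ((Real.log R + n * Real.log 2) * (-q)) := by
    rw [Real.rpow_def_of_pos (hd n), hlog n]
  have e2 : (R * 2 ^ (n+1)) ^ (3:ℕ) = Real.exp ((Real.log R + (n+1) * Real.log 2) * 3) := by
    rw [← Real.rpow_natCast (R * 2 ^ (n+1)) 3, Real.rpow_def_of_pos (hd (n+1)), hlog (n+1)]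
    push_cast; ring_nf
  have e3 : R ^ (3 - q) = Real.exp (Real.log R * (3 - q)) := Real.rpow_def_of_pos hR _
  have e4 : (2:ℝ) ^ (3:ℝ) = Real.exp (Real.log 2 * 3) := Real.rpow_def_of_pos h2 _
  have e5 : ((2:ℝ) ^ (3 - q)) ^ n = Real.exp (Real.log 2 * ((3 - q) * n)) := by
    rw [← Real.rpow_natCast ((2:ℝ) ^ (3-q)) n, ← Real.rpow_mul h2.le, Real.rpow_def_of_pos h2]
  rw [e1, e2, e3, e4, e5]
  have comb : ∀ u v : ℝ, Real.exp u * (Real.exp v * V) = Real.exp (u + v) * V := by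
    intro u v; rw [Real.exp_add]; ring
  have comb2 : ∀ u v w : ℝ,
      Real.exp u * Real.exp v * V * Real.exp w = Real.exp (u + v + w) * V := by
    intro u v w; rw [Real.exp_add, Real.exp_add]; ring
  rw [comb, comb2]
  congr 2
  push_cast
  ring

lemma coverA {R : ℝ} (hR : 0 < R) {z : E3} (hz : z ∈ closedBall (0:E3) R) :
    z ∈ ({0} : Set E3) ∪ ⋃ n : ℕ, (closedBall (0:E3) (R/2^n) \ closedBall 0 (R/2^(n+1))) := by
  by_cases h0 : z = 0
  · left; simp [h0]
  right
  have hz0 : 0 < ‖z‖ := norm_pos_iff.mpr h0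
  have hex : ∃ n : ℕ, R / 2 ^ (n+1) < ‖z‖ := by
    obtain ⟨n, hn⟩ := pow_unbounded_of_one_lt (R / ‖z‖) (one_lt_two (α := ℝ))
    refine ⟨n, ?_⟩
    rw [div_lt_iff₀ (pow_pos two_pos _)]
    calc R < ‖z‖ * 2 ^ n := by
          have := (div_lt_iff₀ hz0).mp hn
          linarith
      _ ≤ ‖z‖ * 2 ^ (n+1) := by
          have h : (2:ℝ) ^ n ≤ 2 ^ (n+1) := pow_le_pow_right₀ one_le_two (Nat.le_succ n)
          nlinarith
  set n₀ := Nat.find hex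
  have h1 : R / 2 ^ (n₀+1) < ‖z‖ := Nat.find_spec hex
  refine mem_iUnion.mpr ⟨n₀, ?_, ?_⟩
  · rw [mem_closedBall_zero_iff]
    rcases Nat.eq_zero_or_pos n₀ with h | h
    · rw [h]; simpa using hz
    · have hlt : n₀ - 1 < n₀ := Nat.sub_lt h one_pos
      have := Nat.find_min hex hlt
      push_neg at this
      rwa [Nat.sub_add_cancel h] at this
  · rw [mem_closedBall_zero_iff]
    push_neg
    exact h1

lemma coverB {R : ℝ} (hR : 0 < R) {z : E3} (hz : z ∉ closedBall (0:E3) R) :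
    z ∈ ⋃ n : ℕ, (closedBall (0:E3) (R*2^(n+1)) \ closedBall 0 (R*2^n)) := by
  rw [mem_closedBall_zero_iff] at hz
  push_neg at hz
  have hex : ∃ n : ℕ, ‖z‖ ≤ R * 2 ^ (n+1) := by
    obtain ⟨n, hn⟩ := pow_unbounded_of_one_lt (‖z‖ / R) (one_lt_two (α := ℝ))
    refine ⟨n, ?_⟩
    have h1 : ‖z‖ < R * 2 ^ n := by
      rw [div_lt_iff₀ hR] at hn; linarith
    have h2 : (R:ℝ) * 2 ^ n ≤ R * 2 ^ (n+1) := by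
      have : (2:ℝ) ^ n ≤ 2 ^ (n+1) := pow_le_pow_right₀ one_le_two (Nat.le_succ n)
      nlinarith
    linarith
  set n₀ := Nat.find hex
  have h1 : ‖z‖ ≤ R * 2 ^ (n₀+1) := Nat.find_spec hex
  refine mem_iUnion.mpr ⟨n₀, ?_, ?_⟩
  · rwa [mem_closedBall_zero_iff]
  · rw [mem_closedBall_zero_iff]
    push_neg
    rcases Nat.eq_zero_or_pos n₀ with h | h
    · rw [h]; simpa using hz
    · have hlt : n₀ - 1 < n₀ := Nat.sub_lt h one_pos
      have := Nat.find_min hex hlt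
      push_neg at this
      rwa [Nat.sub_add_cancel h] at this

lemma factA {p : ℝ} (hp0 : 0 < p) (hp3 : p < 3) : ∃ c : ℝ, 0 ≤ c ∧ ∀ R : ℝ, 0 < R →
    ∫⁻ z in closedBall (0:E3) R, ENNReal.ofReal (‖z‖ ^ (-p)) ≤
      ENNReal.ofReal (c * R ^ (3 - p)) := by
  have hx0 : (0:ℝ) ≤ 2 ^ (p - 3) := Real.rpow_nonneg (by norm_num) _
  have hx1 : (2:ℝ) ^ (p - 3) < 1 :=
    Real.rpow_lt_one_of_one_lt_of_neg one_lt_two (by linarith)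
  refine ⟨(2 ^ p * V3) * (1 - 2 ^ (p - 3))⁻¹,
    mul_nonneg (mul_nonneg (Real.rpow_nonneg (by norm_num) _) V3_nonneg)
      (inv_nonneg.mpr (by linarith)), fun R hR => ?_⟩
  calc ∫⁻ z in closedBall (0:E3) R, ENNReal.ofReal (‖z‖ ^ (-p))
      ≤ ∫⁻ z in (({0} : Set E3) ∪ ⋃ n : ℕ,
          (closedBall (0:E3) (R/2^n) \ closedBall 0 (R/2^(n+1)))),
          ENNReal.ofReal (‖z‖ ^ (-p)) :=
        lintegral_mono_set (fun z hz => coverA hR hz)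
    _ ≤ (∫⁻ z in ({0} : Set E3), ENNReal.ofReal (‖z‖ ^ (-p))) +
        ∫⁻ z in (⋃ n : ℕ, (closedBall (0:E3) (R/2^n) \ closedBall 0 (R/2^(n+1)))),
          ENNReal.ofReal (‖z‖ ^ (-p)) := lintegral_union_le _ _ _
    _ ≤ 0 + ∑' n : ℕ, ∫⁻ z in (closedBall (0:E3) (R/2^n) \ closedBall 0 (R/2^(n+1))),
          ENNReal.ofReal (‖z‖ ^ (-p)) := by
        gcongr
        · exact le_of_eq (setLIntegral_measure_zero _ _ (measure_singleton 0))
        · exact lintegral_iUnion_le _ _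
    _ ≤ ∑' n : ℕ, ENNReal.ofReal ((R ^ (3 - p) * 2 ^ p * V3) * ((2:ℝ) ^ (p - 3)) ^ n) := by
        rw [zero_add]
        refine ENNReal.tsum_le_tsum fun n => ?_
        have key := step3 (s := closedBall (0:E3) (R/2^n) \ closedBall 0 (R/2^(n+1)))
          (r := R/2^n) (C := (R / 2 ^ (n+1)) ^ (-p))
          (by positivity) (Real.rpow_nonneg (by positivity) _)
          diff_subset (fun z => ‖z‖ ^ (-p)) ?_
        · rw [← calcA V3 R p hR n]
          exact key
        · intro z hz
          have h1 : R / 2 ^ (n+1) < ‖z‖ := by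
            have := hz.2
            rw [mem_closedBall_zero_iff] at this
            push_neg at this
            exact this
          exact Real.rpow_le_rpow_of_nonpos (by positivity) h1.le (by linarith)
    _ = ENNReal.ofReal ((R ^ (3 - p) * 2 ^ p * V3) * (1 - 2 ^ (p - 3))⁻¹) :=
        tsum_ofReal_geo _ _ (mul_nonneg (mul_nonneg (Real.rpow_nonneg hR.le _)
          (Real.rpow_nonneg (by norm_num) _)) V3_nonneg) hx0 hx1
    _ = ENNReal.ofReal ((2 ^ p * V3) * (1 - 2 ^ (p - 3))⁻¹ * R ^ (3 - p)) := by ring_nf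

lemma factB {q : ℝ} (hq : 3 < q) : ∃ c : ℝ, 0 ≤ c ∧ ∀ R : ℝ, 0 < R →
    ∫⁻ z in (closedBall (0:E3) R)ᶜ, ENNReal.ofReal (‖z‖ ^ (-q)) ≤
      ENNReal.ofReal (c * R ^ (3 - q)) := by
  have hx0 : (0:ℝ) ≤ 2 ^ (3 - q) := Real.rpow_nonneg (by norm_num) _
  have hx1 : (2:ℝ) ^ (3 - q) < 1 :=
    Real.rpow_lt_one_of_one_lt_of_neg one_lt_two (by linarith)
  refine ⟨(2 ^ (3:ℝ) * V3) * (1 - 2 ^ (3 - q))⁻¹,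
    mul_nonneg (mul_nonneg (Real.rpow_nonneg (by norm_num) _) V3_nonneg)
      (inv_nonneg.mpr (by linarith)), fun R hR => ?_⟩
  calc ∫⁻ z in (closedBall (0:E3) R)ᶜ, ENNReal.ofReal (‖z‖ ^ (-q))
      ≤ ∫⁻ z in (⋃ n : ℕ, (closedBall (0:E3) (R*2^(n+1)) \ closedBall 0 (R*2^n))),
          ENNReal.ofReal (‖z‖ ^ (-q)) :=
        lintegral_mono_set (fun z hz => coverB hR hz)
    _ ≤ ∑' n : ℕ, ∫⁻ z in (closedBall (0:E3) (R*2^(n+1)) \ closedBall 0 (R*2^n)),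
          ENNReal.ofReal (‖z‖ ^ (-q)) := lintegral_iUnion_le _ _
    _ ≤ ∑' n : ℕ, ENNReal.ofReal ((R ^ (3 - q) * 2 ^ (3:ℝ) * V3) * ((2:ℝ) ^ (3 - q)) ^ n) := by
        refine ENNReal.tsum_le_tsum fun n => ?_
        have key := step3 (s := closedBall (0:E3) (R*2^(n+1)) \ closedBall 0 (R*2^n))
          (r := R*2^(n+1)) (C := (R * 2 ^ n) ^ (-q))
          (by positivity) (Real.rpow_nonneg (by positivity) _)
          diff_subset (fun z => ‖z‖ ^ (-q)) ?_
        · rw [← calcB V3 R q hR n]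
          exact key
        · intro z hz
          have h1 : R * 2 ^ n < ‖z‖ := by
            have := hz.2
            rw [mem_closedBall_zero_iff] at this
            push_neg at this
            exact this
          exact Real.rpow_le_rpow_of_nonpos (by positivity) h1.le (by linarith)
    _ = ENNReal.ofReal ((R ^ (3 - q) * 2 ^ (3:ℝ) * V3) * (1 - 2 ^ (3 - q))⁻¹) :=
        tsum_ofReal_geo _ _ (mul_nonneg (mul_nonneg (Real.rpow_nonneg hR.le _)
          (Real.rpow_nonneg (by norm_num) _)) V3_nonneg) hx0 hx1
    _ = ENNReal.ofReal ((2 ^ (3:ℝ) * V3) * (1 - 2 ^ (3 - q))⁻¹ * R ^ (3 - q)) := by ring_nf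

lemma factA' {p : ℝ} (hp0 : 0 < p) (hp3 : p < 3) : ∃ c : ℝ, 0 ≤ c ∧
    ∀ (x : E3) (R : ℝ), 0 < R →
    ∫⁻ y in closedBall x R, ENNReal.ofReal (‖x - y‖ ^ (-p)) ≤
      ENNReal.ofReal (c * R ^ (3 - p)) := by
  obtain ⟨c, hc, hbound⟩ := factA hp0 hp3
  refine ⟨c, hc, fun x R hR => ?_⟩
  have hmeas : Measurable fun z : E3 => ENNReal.ofReal (‖z‖ ^ (-p)) := by fun_prop
  set G : E3 → ℝ≥0∞ :=
    (closedBall (0:E3) R).indicator (fun z => ENNReal.ofReal (‖z‖ ^ (-p))) with hG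
  have hGmeas : Measurable G := hmeas.indicator measurableSet_closedBall
  have key : ∀ y : E3,
      (closedBall x R).indicator (fun y => ENNReal.ofReal (‖x - y‖ ^ (-p))) y = G (x - y) := by
    intro y
    have hmem : y ∈ closedBall x R ↔ x - y ∈ closedBall (0:E3) R := by
      rw [mem_closedBall, mem_closedBall_zero_iff, dist_comm, dist_eq_norm]
    by_cases h : y ∈ closedBall x R
    · rw [indicator_of_mem h, hG, indicator_of_mem (hmem.mp h)]
    · rw [indicator_of_notMem h, hG, indicator_of_notMem (fun hc' => h (hmem.mpr hc'))]
  calc ∫⁻ y in closedBall x R, ENNReal.ofReal (‖x - y‖ ^ (-p))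
      = ∫⁻ y, (closedBall x R).indicator (fun y => ENNReal.ofReal (‖x - y‖ ^ (-p))) y :=
        (lintegral_indicator measurableSet_closedBall _).symm
    _ = ∫⁻ y, G (x - y) := by simp_rw [key]
    _ = ∫⁻ z, G z :=
        (MeasureTheory.Measure.measurePreserving_sub_left volume x).lintegral_comp hGmeas
    _ = ∫⁻ z in closedBall (0:E3) R, ENNReal.ofReal (‖z‖ ^ (-p)) :=
        lintegral_indicator measurableSet_closedBall _
    _ ≤ ENNReal.ofReal (c * R ^ (3 - p)) := hbound R hR

lemma japBall {b : ℝ} (hb0 : 0 < b) (hb3 : b < 3) : ∃ c : ℝ, 0 ≤ c ∧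
    ∀ R : ℝ, 1 ≤ R →
    ∫⁻ y in closedBall (0:E3) R, ENNReal.ofReal (jap y ^ (-b)) ≤
      ENNReal.ofReal (c * R ^ (3 - b)) := by
  obtain ⟨c, hc, hbound⟩ := factA hb0 hb3
  refine ⟨V3 + c, by linarith [V3_nonneg], fun R hR => ?_⟩
  have hR0 : 0 < R := lt_of_lt_of_le one_pos hR
  have hmeas : Measurable fun z : E3 => ENNReal.ofReal (‖z‖ ^ (-b)) := by fun_prop
  calc ∫⁻ y in closedBall (0:E3) R, ENNReal.ofReal (jap y ^ (-b))
      ≤ ∫⁻ y in (closedBall (0:E3) 1 ∪ (closedBall (0:E3) R \ closedBall 0 1)),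
          ENNReal.ofReal (jap y ^ (-b)) := by
        refine lintegral_mono_set fun y hy => ?_
        by_cases h : y ∈ closedBall (0:E3) 1
        · exact Or.inl h
        · exact Or.inr ⟨hy, h⟩
    _ ≤ (∫⁻ y in closedBall (0:E3) 1, ENNReal.ofReal (jap y ^ (-b))) +
        ∫⁻ y in (closedBall (0:E3) R \ closedBall 0 1), ENNReal.ofReal (jap y ^ (-b)) :=
        lintegral_union_le _ _ _
    _ ≤ ENNReal.ofReal V3 + ENNReal.ofReal (c * R ^ (3 - b)) := by
        gcongr
        · calc ∫⁻ y in closedBall (0:E3) 1, ENNReal.ofReal (jap y ^ (-b))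
              ≤ ∫⁻ _ in closedBall (0:E3) 1, ENNReal.ofReal (1:ℝ) := by
                refine setLIntegral_mono measurable_const fun y _ => ?_
                refine ENNReal.ofReal_le_ofReal ?_
                exact Real.rpow_le_one_of_one_le_of_nonpos (jap_one_le y) (by linarith)
            _ = ENNReal.ofReal (1:ℝ) * volume (closedBall (0:E3) 1) := setLIntegral_const _ _
            _ = ENNReal.ofReal V3 := by
                rw [vol_cb zero_le_one, ENNReal.ofReal_one, one_mul, one_pow, one_mul]
        · calc ∫⁻ y in (closedBall (0:E3) R \ closedBall 0 1), ENNReal.ofReal (jap y ^ (-b))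
              ≤ ∫⁻ y in (closedBall (0:E3) R \ closedBall 0 1),
                  ENNReal.ofReal (‖y‖ ^ (-b)) := by
                refine setLIntegral_mono hmeas fun y hy => ?_
                refine ENNReal.ofReal_le_ofReal ?_
                have h1 : 1 < ‖y‖ := by
                  have := hy.2
                  rw [mem_closedBall_zero_iff] at this
                  push_neg at this
                  exact this
                exact Real.rpow_le_rpow_of_nonpos (by linarith) (norm_le_jap y) (by linarith)
            _ ≤ ∫⁻ y in closedBall (0:E3) R, ENNReal.ofReal (‖y‖ ^ (-b)) :=
                lintegral_mono_set diff_subset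
            _ ≤ ENNReal.ofReal (c * R ^ (3 - b)) := hbound R hR0
    _ ≤ ENNReal.ofReal ((V3 + c) * R ^ (3 - b)) := by
        rw [← ENNReal.ofReal_add V3_nonneg (by positivity)]
        refine ENNReal.ofReal_le_ofReal ?_
        have hRb : (1:ℝ) ≤ R ^ (3 - b) := Real.one_le_rpow hR (by linarith)
        nlinarith [V3_nonneg]

lemma conv {p b : ℝ} (hp0 : 0 < p) (hp3 : p < 3) (hb0 : 0 < b) (hb3 : b < 3)
    (hpb : 3 < p + b) :
    ∃ c : ℝ, 0 ≤ c ∧ ∀ x : E3,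
      ∫⁻ y, ENNReal.ofReal (‖x - y‖ ^ (-p) * jap y ^ (-b)) ≤
        ENNReal.ofReal (c * jap x ^ (3 - p - b)) := by
  obtain ⟨cA, hcA, hA⟩ := factA' hp0 hp3
  obtain ⟨cJ, hcJ, hJb⟩ := japBall hb0 hb3
  obtain ⟨cB, hcB, hB⟩ := factB hpb
  have h4 : (0:ℝ) < 4 := by norm_num
  have h2 : (0:ℝ) < 2 := two_pos
  have hc1 : (0:ℝ) ≤ (4:ℝ)^b * 2^(p-3) * cA :=
    mul_nonneg (mul_nonneg (Real.rpow_nonneg h4.le _) (Real.rpow_nonneg h2.le _)) hcA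
  have hc2 : (0:ℝ) ≤ (2:ℝ)^(p+3-b) * cJ := mul_nonneg (Real.rpow_nonneg h2.le _) hcJ
  have hc3 : (0:ℝ) ≤ (2:ℝ)^p * 2^(3-p-b) * cB :=
    mul_nonneg (mul_nonneg (Real.rpow_nonneg h2.le _) (Real.rpow_nonneg h2.le _)) hcB
  refine ⟨(4:ℝ) ^ b * 2 ^ (p-3) * cA + 2 ^ (p+3-b) * cJ + 2 ^ p * 2 ^ (3-p-b) * cB,
    add_nonneg (add_nonneg hc1 hc2) hc3, fun x => ?_⟩
  set J := jap x with hJdef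
  have hJ1 : 1 ≤ J := jap_one_le x
  have hJ0 : 0 < J := jap_pos x
  have hR₁ : (0:ℝ) < J / 2 := by linarith
  set f : E3 → ℝ≥0∞ := fun y => ENNReal.ofReal (‖x - y‖ ^ (-p) * jap y ^ (-b)) with hf
  set A1 := closedBall x (J/2)
  set S1 := closedBall (0:E3) (2*J)
  have hJe : (0:ℝ) ≤ J ^ (3-p-b) := Real.rpow_nonneg hJ0.le _
  -- Term 1
  have T1 : ∫⁻ y in A1, f y ≤ ENNReal.ofReal ((4:ℝ)^b * 2^(p-3) * cA * J ^ (3-p-b)) := by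
    have hpt : ∀ y ∈ A1, f y ≤ ENNReal.ofReal (((4:ℝ)^b * J^(-b)) * ‖x - y‖ ^ (-p)) := by
      intro y hy
      refine ENNReal.ofReal_le_ofReal ?_
      have hxy : ‖x - y‖ ≤ J / 2 := by
        rw [mem_closedBall, dist_comm, dist_eq_norm] at hy
        exact hy
      have hjy : J / 4 ≤ jap y := by
        have h1 : ‖x‖ ≤ ‖y‖ + ‖x - y‖ := by
          have := norm_add_le (x - y) y
          simpa [sub_add_cancel, add_comm] using this
        have h2' : J ≤ 1 + ‖x‖ := jap_le_one_add x
        have h3 : 1 + ‖y‖ ≤ 2 * jap y := by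
          have := jap_one_le y; have := norm_le_jap y; linarith
        linarith
      have hb' : jap y ^ (-b) ≤ (4:ℝ)^b * J^(-b) := by
        have := Real.rpow_le_rpow_of_nonpos (by linarith : (0:ℝ) < J/4) hjy
          (by linarith : -b ≤ 0)
        calc jap y ^ (-b) ≤ (J/4) ^ (-b) := this
          _ = (4:ℝ)^b * J^(-b) := by
              rw [div_rpow' hJ0 h4, neg_neg]; ring
      calc ‖x - y‖ ^ (-p) * jap y ^ (-b)
          ≤ ‖x - y‖ ^ (-p) * ((4:ℝ)^b * J^(-b)) :=
            mul_le_mul_of_nonneg_left hb' (Real.rpow_nonneg (norm_nonneg _) _)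
        _ = ((4:ℝ)^b * J^(-b)) * ‖x - y‖ ^ (-p) := by ring
    calc ∫⁻ y in A1, f y
        ≤ ∫⁻ y in A1, ENNReal.ofReal (((4:ℝ)^b * J^(-b)) * ‖x - y‖ ^ (-p)) := by
          refine setLIntegral_mono ?_ hpt
          fun_prop
      _ = ENNReal.ofReal ((4:ℝ)^b * J^(-b)) * ∫⁻ y in A1, ENNReal.ofReal (‖x - y‖ ^ (-p)) := by
          simp_rw [ENNReal.ofReal_mul (mul_nonneg (Real.rpow_nonneg h4.le _)
            (Real.rpow_nonneg hJ0.le _))]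
          exact lintegral_const_mul' _ _ ENNReal.ofReal_ne_top
      _ ≤ ENNReal.ofReal ((4:ℝ)^b * J^(-b)) * ENNReal.ofReal (cA * (J/2) ^ (3-p)) := by
          gcongr
          exact hA x (J/2) hR₁
      _ = ENNReal.ofReal (((4:ℝ)^b * J^(-b)) * (cA * (J/2) ^ (3-p))) :=
          (ENNReal.ofReal_mul (mul_nonneg (Real.rpow_nonneg h4.le _)
            (Real.rpow_nonneg hJ0.le _))).symm
      _ = ENNReal.ofReal ((4:ℝ)^b * 2^(p-3) * cA * J ^ (3-p-b)) := by
          congr 1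
          rw [div_rpow' hJ0 h2, show -(3-p) = p-3 by ring]
          have e0 : J^(-b) * J^(3-p) = J^(3-p-b) := by
            rw [← Real.rpow_add hJ0]; ring_nf
          rw [← e0]; ring
  -- Term 2
  have T2 : ∫⁻ y in A1ᶜ ∩ S1, f y ≤ ENNReal.ofReal (2^(p+3-b) * cJ * J ^ (3-p-b)) := by
    have hpt : ∀ y ∈ A1ᶜ ∩ S1, f y ≤ ENNReal.ofReal ((J/2)^(-p) * jap y ^ (-b)) := by
      intro y hy
      refine ENNReal.ofReal_le_ofReal ?_
      have hxy : J / 2 ≤ ‖x - y‖ := by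
        have := hy.1
        rw [mem_compl_iff, mem_closedBall, dist_comm, dist_eq_norm] at this
        push_neg at this
        exact this.le
      have : ‖x - y‖ ^ (-p) ≤ (J/2) ^ (-p) :=
        Real.rpow_le_rpow_of_nonpos hR₁ hxy (by linarith)
      exact mul_le_mul_of_nonneg_right this (Real.rpow_nonneg (jap_pos y).le _)
    calc ∫⁻ y in A1ᶜ ∩ S1, f y
        ≤ ∫⁻ y in A1ᶜ ∩ S1, ENNReal.ofReal ((J/2)^(-p) * jap y ^ (-b)) := by
          refine setLIntegral_mono ?_ hpt
          unfold jap
          fun_prop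
      _ = ENNReal.ofReal ((J/2)^(-p)) * ∫⁻ y in A1ᶜ ∩ S1, ENNReal.ofReal (jap y ^ (-b)) := by
          simp_rw [ENNReal.ofReal_mul (Real.rpow_nonneg hR₁.le _)]
          exact lintegral_const_mul' _ _ ENNReal.ofReal_ne_top
      _ ≤ ENNReal.ofReal ((J/2)^(-p)) * ∫⁻ y in S1, ENNReal.ofReal (jap y ^ (-b)) := by
          gcongr
          exact inter_subset_right
      _ ≤ ENNReal.ofReal ((J/2)^(-p)) * ENNReal.ofReal (cJ * (2*J) ^ (3-b)) := by
          gcongr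
          exact hJb (2*J) (by linarith)
      _ = ENNReal.ofReal ((J/2)^(-p) * (cJ * (2*J) ^ (3-b))) :=
          (ENNReal.ofReal_mul (Real.rpow_nonneg hR₁.le _)).symm
      _ = ENNReal.ofReal (2^(p+3-b) * cJ * J ^ (3-p-b)) := by
          congr 1
          rw [div_rpow' hJ0 h2, neg_neg, Real.mul_rpow h2.le hJ0.le]
          have e1 : J^(-p) * J^(3-b) = J^(3-p-b) := by
            rw [← Real.rpow_add hJ0]; ring_nf
          have e2 : (2:ℝ)^p * 2^(3-b) = 2^(p+3-b) := by
            rw [← Real.rpow_add h2]; ring_nf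
          rw [← e1, ← e2]; ring
  -- Term 3
  have T3 : ∫⁻ y in A1ᶜ \ S1, f y ≤ ENNReal.ofReal (2^p * 2^(3-p-b) * cB * J ^ (3-p-b)) := by
    have hpt : ∀ y ∈ A1ᶜ \ S1, f y ≤ ENNReal.ofReal ((2:ℝ)^p * ‖y‖ ^ (-(p+b))) := by
      intro y hy
      refine ENNReal.ofReal_le_ofReal ?_
      have hy2 : 2*J < ‖y‖ := by
        have := hy.2
        rw [mem_closedBall_zero_iff] at this
        push_neg at this
        exact this
      have hy0 : 0 < ‖y‖ := by linarith
      have hxy : ‖y‖/2 ≤ ‖x - y‖ := by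
        have h1 : ‖y‖ ≤ ‖x‖ + ‖x - y‖ := by
          have := norm_add_le (x - y) (y - x + y)
          have h2' : ‖y‖ - ‖x‖ ≤ ‖x - y‖ := by
            have := norm_sub_norm_le (y) (x)
            have h3 : ‖y - x‖ = ‖x - y‖ := norm_sub_rev y x
            linarith [norm_sub_norm_le y x, h3 ▸ (norm_sub_norm_le y x)]
          linarith
        have h2'' : ‖x‖ ≤ J := norm_le_jap x
        linarith
      have e1 : ‖x - y‖ ^ (-p) ≤ (‖y‖/2) ^ (-p) :=
        Real.rpow_le_rpow_of_nonpos (by linarith) hxy (by linarith)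
      have e2 : jap y ^ (-b) ≤ ‖y‖ ^ (-b) :=
        Real.rpow_le_rpow_of_nonpos hy0 (norm_le_jap y) (by linarith)
      calc ‖x - y‖ ^ (-p) * jap y ^ (-b)
          ≤ (‖y‖/2) ^ (-p) * ‖y‖ ^ (-b) := by
            refine mul_le_mul e1 e2 (Real.rpow_nonneg (jap_pos y).le _)
              (Real.rpow_nonneg (by positivity) _)
        _ = (2:ℝ)^p * ‖y‖ ^ (-(p+b)) := by
            have e3 : ‖y‖^(-p) * ‖y‖^(-b) = ‖y‖^(-(p+b)) := by
              rw [← Real.rpow_add hy0]; ring_nf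
            rw [div_rpow' hy0 h2, neg_neg, ← e3]; ring
    calc ∫⁻ y in A1ᶜ \ S1, f y
        ≤ ∫⁻ y in A1ᶜ \ S1, ENNReal.ofReal ((2:ℝ)^p * ‖y‖ ^ (-(p+b))) := by
          refine setLIntegral_mono ?_ hpt
          fun_prop
      _ ≤ ∫⁻ y in S1ᶜ, ENNReal.ofReal ((2:ℝ)^p * ‖y‖ ^ (-(p+b))) := by
          refine lintegral_mono_set fun y hy => hy.2
      _ = ENNReal.ofReal ((2:ℝ)^p) * ∫⁻ y in S1ᶜ, ENNReal.ofReal (‖y‖ ^ (-(p+b))) := by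
          simp_rw [ENNReal.ofReal_mul (Real.rpow_nonneg h2.le _)]
          exact lintegral_const_mul' _ _ ENNReal.ofReal_ne_top
      _ ≤ ENNReal.ofReal ((2:ℝ)^p) * ENNReal.ofReal (cB * (2*J) ^ (3-(p+b))) := by
          gcongr
          exact hB (2*J) (by linarith)
      _ = ENNReal.ofReal ((2:ℝ)^p * (cB * (2*J) ^ (3-(p+b)))) :=
          (ENNReal.ofReal_mul (Real.rpow_nonneg h2.le _)).symm
      _ = ENNReal.ofReal (2^p * 2^(3-p-b) * cB * J ^ (3-p-b)) := by
          congr 1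
          rw [show (3:ℝ)-(p+b) = 3-p-b by ring, Real.mul_rpow h2.le hJ0.le]
          ring
  -- combine
  calc ∫⁻ y, f y
      = (∫⁻ y in A1, f y) + ∫⁻ y in A1ᶜ, f y :=
        (lintegral_add_compl f measurableSet_closedBall).symm
    _ ≤ (∫⁻ y in A1, f y) + ((∫⁻ y in A1ᶜ ∩ S1, f y) + ∫⁻ y in A1ᶜ \ S1, f y) := by
        gcongr
        calc ∫⁻ y in A1ᶜ, f y ≤ ∫⁻ y in (A1ᶜ ∩ S1) ∪ (A1ᶜ \ S1), f y := by
              refine lintegral_mono_set fun y hy => ?_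
              by_cases h : y ∈ S1
              · exact Or.inl ⟨hy, h⟩
              · exact Or.inr ⟨hy, h⟩
          _ ≤ (∫⁻ y in A1ᶜ ∩ S1, f y) + ∫⁻ y in A1ᶜ \ S1, f y := lintegral_union_le _ _ _
    _ ≤ ENNReal.ofReal ((4:ℝ)^b * 2^(p-3) * cA * J ^ (3-p-b)) +
        (ENNReal.ofReal (2^(p+3-b) * cJ * J ^ (3-p-b)) +
         ENNReal.ofReal (2^p * 2^(3-p-b) * cB * J ^ (3-p-b))) := by
        gcongr
    _ = ENNReal.ofReal (((4:ℝ)^b * 2^(p-3) * cA + 2^(p+3-b) * cJ + 2^p * 2^(3-p-b) * cB) *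
          J ^ (3-p-b)) := by
        rw [← ENNReal.ofReal_add (mul_nonneg hc2 hJe) (mul_nonneg hc3 hJe),
          ← ENNReal.ofReal_add (mul_nonneg hc1 hJe) (add_nonneg (mul_nonneg hc2 hJe)
            (mul_nonneg hc3 hJe))]
        congr 1
        ring

lemma factC {q : ℝ} (hq : 3 < q) : ∃ c : ℝ, 0 ≤ c ∧
    ∫⁻ x : E3, ENNReal.ofReal (jap x ^ (-q)) ≤ ENNReal.ofReal c := by
  have h3 : (Module.finrank ℝ E3 : ℝ) < q := by
    simp only [finrank_euclideanSpace, Fintype.card_fin]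
    exact_mod_cast hq
  set T := ∫⁻ x : E3, ENNReal.ofReal ((1 + ‖x‖) ^ (-q)) with hT
  have hTfin : T < ⊤ := finite_integral_one_add_norm h3
  refine ⟨(ENNReal.ofReal ((2:ℝ)^q) * T).toReal, ENNReal.toReal_nonneg, ?_⟩
  have hmul_ne : ENNReal.ofReal ((2:ℝ)^q) * T ≠ ⊤ :=
    ENNReal.mul_ne_top ENNReal.ofReal_ne_top hTfin.ne
  rw [ENNReal.ofReal_toReal hmul_ne]
  calc ∫⁻ x : E3, ENNReal.ofReal (jap x ^ (-q))
      ≤ ∫⁻ x : E3, ENNReal.ofReal ((2:ℝ)^q * (1 + ‖x‖) ^ (-q)) := by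
        refine lintegral_mono fun x => ENNReal.ofReal_le_ofReal ?_
        have h1 : (1 + ‖x‖) / 2 ≤ jap x := by
          have hs2 : Real.sqrt 2 ≤ 2 := by
            nlinarith [Real.sq_sqrt (show (0:ℝ) ≤ 2 by norm_num), Real.sqrt_nonneg 2]
          have := one_add_norm_le_sqrt_two_mul_sqrt x
          have hj : 1 + ‖x‖ ≤ 2 * jap x := by
            rw [jap]
            nlinarith [Real.sqrt_nonneg (1 + ‖x‖^2)]
          linarith
        have h0 : (0:ℝ) < (1 + ‖x‖) / 2 := by positivity
        calc jap x ^ (-q) ≤ ((1 + ‖x‖)/2) ^ (-q) :=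
              Real.rpow_le_rpow_of_nonpos h0 h1 (by linarith)
          _ = (2:ℝ)^q * (1 + ‖x‖) ^ (-q) := by
              rw [div_rpow' (by positivity) two_pos, neg_neg]; ring
    _ = ENNReal.ofReal ((2:ℝ)^q) * T := by
        simp_rw [ENNReal.ofReal_mul (Real.rpow_nonneg two_pos.le q)]
        exact lintegral_const_mul' _ _ ENNReal.ofReal_ne_top

end Stmt12Aux


open Metric Set ENNReal Stmt12Aux

theorem stmt_12 (σ α γ : ℝ) (hσ : 1 / 2 < σ) (hα : 1 / 2 < α) (hσα : 2 < σ + α)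
    (hγ0 : 0 < γ)
    (hγ : γ < min (min (σ + α - 2) (σ - 1 / 2)) (min (α - 1 / 2) 1)) :
    ∃ C : ℝ, ∀ l : ℝ, 0 < l →
      (∫⁻ x : E3, ∫⁻ y : E3,
        ENNReal.ofReal (jap x ^ (-(2 : ℝ) * σ) * (min l ‖x - y‖⁻¹) ^ 2 *
          jap y ^ (-(2 : ℝ) * α)))
        ≤ ENNReal.ofReal (C * l ^ (2 * γ)) := by
  rw [lt_min_iff, lt_min_iff, lt_min_iff] at hγ
  obtain ⟨⟨hγ1, hγ2⟩, hγ3, hγ4⟩ := hγ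
  set p : ℝ := 2 - 2*γ with hp
  have hp0 : 0 < p := by simp only [hp]; linarith
  have hp3 : p < 3 := by simp only [hp]; linarith
  set M : ℝ := max (1 + 2*γ) (4 - 2*σ + 2*γ) with hM
  have hM3 : M < 3 := by
    rw [hM, max_lt_iff]; constructor <;> linarith
  have hM1 : 1 + 2*γ ≤ M := le_max_left _ _
  have hM2 : 4 - 2*σ + 2*γ ≤ M := le_max_right _ _
  set b : ℝ := min (2*α) ((M+3)/2) with hb
  have hb2α : b ≤ 2*α := min_le_left _ _
  have hbM : b ≤ (M+3)/2 := min_le_right _ _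
  have hb0 : 0 < b := by
    rw [hb, lt_min_iff]; constructor <;> linarith
  have hb3 : b < 3 := by linarith
  have hbgt : M < b := by
    rw [hb, lt_min_iff]
    constructor
    · rw [hM, max_lt_iff]; constructor <;> linarith
    · linarith
  have hpb : 3 < p + b := by simp only [hp]; linarith
  set q : ℝ := 2*σ + p + b - 3 with hq
  have hq3 : 3 < q := by simp only [hq, hp]; linarith
  obtain ⟨cv, hcv, hconv⟩ := conv hp0 hp3 hb0 hb3 hpb
  obtain ⟨cC, hcC, hC⟩ := factC hq3
  refine ⟨cv * cC, fun l hl => ?_⟩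
  have hl2γ : (0:ℝ) ≤ l ^ (2*γ) := Real.rpow_nonneg hl.le _
  -- pointwise bound
  have key : ∀ x y : E3,
      jap x ^ (-(2:ℝ) * σ) * (min l ‖x - y‖⁻¹) ^ 2 * jap y ^ (-(2:ℝ) * α) ≤
        (l ^ (2*γ) * jap x ^ (-(2:ℝ) * σ)) * (‖x - y‖ ^ (-p) * jap y ^ (-b)) := by
    intro x y
    have hr0 : (0:ℝ) ≤ ‖x - y‖ := norm_nonneg _
    rcases eq_or_lt_of_le hr0 with h0 | h0
    · have hr00 : ‖x - y‖ = 0 := h0.symm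
      rw [hr00, _root_.inv_zero, min_eq_right hl.le, Real.zero_rpow (by linarith : -p ≠ 0)]
      have hL : jap x ^ (-(2:ℝ) * σ) * (0:ℝ) ^ 2 * jap y ^ (-(2:ℝ) * α) = 0 := by ring
      have hR : (l ^ (2*γ) * jap x ^ (-(2:ℝ) * σ)) * ((0:ℝ) * jap y ^ (-b)) = 0 := by ring
      rw [hL, hR]
    · have hax : (0:ℝ) ≤ jap x ^ (-(2:ℝ) * σ) := Real.rpow_nonneg (jap_pos x).le _
      have hay : (0:ℝ) ≤ jap y ^ (-(2:ℝ) * α) := Real.rpow_nonneg (jap_pos y).le _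
      have hm0 : 0 < min l ‖x - y‖⁻¹ := lt_min hl (inv_pos.mpr h0)
      have hmsq : (min l ‖x - y‖⁻¹) ^ 2 ≤ l ^ (2*γ) * ‖x - y‖ ^ (-p) := by
        have e1 : (min l ‖x - y‖⁻¹) ^ (2:ℕ) =
            (min l ‖x - y‖⁻¹) ^ (2*γ) * (min l ‖x - y‖⁻¹) ^ (2 - 2*γ) := by
          rw [← Real.rpow_natCast (min l ‖x - y‖⁻¹) 2, ← Real.rpow_add hm0]
          norm_num
        have s1 : (min l ‖x - y‖⁻¹) ^ (2*γ) ≤ l ^ (2*γ) :=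
          Real.rpow_le_rpow hm0.le (min_le_left _ _) (by linarith)
        have s2 : (min l ‖x - y‖⁻¹) ^ (2 - 2*γ) ≤ ‖x - y‖ ^ (-p) := by
          have h' : (min l ‖x - y‖⁻¹) ^ (2 - 2*γ) ≤ (‖x - y‖⁻¹) ^ (2 - 2*γ) :=
            Real.rpow_le_rpow hm0.le (min_le_right _ _) (by linarith)
          calc (min l ‖x - y‖⁻¹) ^ (2 - 2*γ) ≤ (‖x - y‖⁻¹) ^ (2 - 2*γ) := h'
            _ = ‖x - y‖ ^ (-p) := by
                rw [Real.inv_rpow hr0, ← Real.rpow_neg hr0]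
        calc (min l ‖x - y‖⁻¹) ^ 2
            = (min l ‖x - y‖⁻¹) ^ (2*γ) * (min l ‖x - y‖⁻¹) ^ (2 - 2*γ) := e1
          _ ≤ l ^ (2*γ) * ‖x - y‖ ^ (-p) :=
            mul_le_mul s1 s2 (Real.rpow_nonneg hm0.le _) hl2γ
      have hyb : jap y ^ (-(2:ℝ) * α) ≤ jap y ^ (-b) :=
        Real.rpow_le_rpow_of_exponent_le (jap_one_le y) (by linarith)
      calc jap x ^ (-(2:ℝ) * σ) * (min l ‖x - y‖⁻¹) ^ 2 * jap y ^ (-(2:ℝ) * α)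
          ≤ jap x ^ (-(2:ℝ) * σ) * (l ^ (2*γ) * ‖x - y‖ ^ (-p)) * jap y ^ (-b) := by
            refine mul_le_mul ?_ hyb hay ?_
            · exact mul_le_mul_of_nonneg_left hmsq hax
            · exact mul_nonneg hax (mul_nonneg hl2γ (Real.rpow_nonneg hr0 _))
        _ = (l ^ (2*γ) * jap x ^ (-(2:ℝ) * σ)) * (‖x - y‖ ^ (-p) * jap y ^ (-b)) := by ring
  -- inner integral bound
  have hLa : ∀ x : E3, (0:ℝ) ≤ l ^ (2*γ) * jap x ^ (-(2:ℝ) * σ) :=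
    fun x => mul_nonneg hl2γ (Real.rpow_nonneg (jap_pos x).le _)
  have inner : ∀ x : E3,
      (∫⁻ y : E3, ENNReal.ofReal (jap x ^ (-(2:ℝ) * σ) * (min l ‖x - y‖⁻¹) ^ 2 *
        jap y ^ (-(2:ℝ) * α))) ≤
      ENNReal.ofReal ((l ^ (2*γ) * cv) * jap x ^ (-q)) := by
    intro x
    calc (∫⁻ y : E3, ENNReal.ofReal (jap x ^ (-(2:ℝ) * σ) * (min l ‖x - y‖⁻¹) ^ 2 *
            jap y ^ (-(2:ℝ) * α)))
        ≤ ∫⁻ y : E3, ENNReal.ofReal ((l ^ (2*γ) * jap x ^ (-(2:ℝ) * σ)) *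
            (‖x - y‖ ^ (-p) * jap y ^ (-b))) :=
          lintegral_mono fun y => ENNReal.ofReal_le_ofReal (key x y)
      _ = ENNReal.ofReal (l ^ (2*γ) * jap x ^ (-(2:ℝ) * σ)) *
            ∫⁻ y : E3, ENNReal.ofReal (‖x - y‖ ^ (-p) * jap y ^ (-b)) := by
          simp_rw [ENNReal.ofReal_mul (hLa x)]
          exact lintegral_const_mul' _ _ ENNReal.ofReal_ne_top
      _ ≤ ENNReal.ofReal (l ^ (2*γ) * jap x ^ (-(2:ℝ) * σ)) *
            ENNReal.ofReal (cv * jap x ^ (3 - p - b)) := by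
          gcongr
          exact hconv x
      _ = ENNReal.ofReal ((l ^ (2*γ) * jap x ^ (-(2:ℝ) * σ)) *
            (cv * jap x ^ (3 - p - b))) := (ENNReal.ofReal_mul (hLa x)).symm
      _ = ENNReal.ofReal ((l ^ (2*γ) * cv) * jap x ^ (-q)) := by
          congr 1
          have e0 : jap x ^ (-(2:ℝ) * σ) * jap x ^ (3 - p - b) = jap x ^ (-q) := by
            rw [← Real.rpow_add (jap_pos x)]
            congr 1
            simp only [hq]; ring
          rw [← e0]; ring
  calc (∫⁻ x : E3, ∫⁻ y : E3,
        ENNReal.ofReal (jap x ^ (-(2 : ℝ) * σ) * (min l ‖x - y‖⁻¹) ^ 2 *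
          jap y ^ (-(2 : ℝ) * α)))
      ≤ ∫⁻ x : E3, ENNReal.ofReal ((l ^ (2*γ) * cv) * jap x ^ (-q)) :=
        lintegral_mono fun x => inner x
    _ = ENNReal.ofReal (l ^ (2*γ) * cv) * ∫⁻ x : E3, ENNReal.ofReal (jap x ^ (-q)) := by
        simp_rw [ENNReal.ofReal_mul (mul_nonneg hl2γ hcv)]
        exact lintegral_const_mul' _ _ ENNReal.ofReal_ne_top
    _ ≤ ENNReal.ofReal (l ^ (2*γ) * cv) * ENNReal.ofReal cC := by
        gcongr
    _ = ENNReal.ofReal ((l ^ (2*γ) * cv) * cC) :=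
        (ENNReal.ofReal_mul (mul_nonneg hl2γ hcv)).symm
    _ = ENNReal.ofReal ((cv * cC) * l ^ (2*γ)) := by ring_nf
end
end

section
/- Let σ > 2 and α > 2. There is a constant C, depending only on σ and α, such that for every λ₀ ∈ (0, 1] and every measurable function h : ℝ → ℂ satisfying |h(u)| ≤ λ₀ (1 + λ₀|u|)^{-10} for all u ∈ ℝ, one has ∫_ℝ ( ∫_{ℝ³} ∫_{ℝ³} ⟨x⟩^{-2σ} |h(u + |x − y|)|² ⟨y⟩^{-2α} dx dy )^{1/2} du ≤ C. -/
open MeasureTheory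
open scoped ENNReal NNReal

noncomputable section

set_option maxHeartbeats 1000000



-- real AM-GM
lemma real_amgm {x y : ℝ} (hx : 0 ≤ x) (hy : 0 ≤ y) : (x*y) ^ ((1:ℝ)/2) ≤ (x+y)/2 := by
  rw [← Real.sqrt_eq_rpow, Real.sqrt_mul hx]
  nlinarith [sq_nonneg (Real.sqrt x - Real.sqrt y), Real.sq_sqrt hx, Real.sq_sqrt hy,
    Real.sqrt_nonneg x, Real.sqrt_nonneg y]

lemma ennreal_amgm (a b : ℝ≥0∞) : (a*b) ^ ((1:ℝ)/2) ≤ 2⁻¹ * a + 2⁻¹ * b := by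
  rcases eq_or_ne a ⊤ with ha | ha
  · rcases eq_or_ne b 0 with hb | hb
    · simp [hb]
    · refine le_trans ?_ le_self_add
      simp [ha, ENNReal.top_mul hb, ENNReal.top_rpow_of_pos (by norm_num : (0:ℝ) < 1/2),
        ENNReal.mul_top (by norm_num : (2⁻¹:ℝ≥0∞) ≠ 0)]
  rcases eq_or_ne b ⊤ with hb | hb
  · rcases eq_or_ne a 0 with ha0 | ha0
    · simp [ha0]
    · refine le_trans ?_ le_add_self
      simp [hb, ENNReal.mul_top ha0, ENNReal.top_rpow_of_pos (by norm_num : (0:ℝ) < 1/2),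
        ENNReal.mul_top (by norm_num : (2⁻¹:ℝ≥0∞) ≠ 0)]
  lift a to ℝ≥0 using ha
  lift b to ℝ≥0 using hb
  have h2 : (a*b) ^ ((1:ℝ)/2) ≤ 2⁻¹ * a + 2⁻¹ * b := by
    rw [← NNReal.coe_le_coe]
    push_cast [NNReal.coe_rpow]
    have := real_amgm (x := a) (y := b) a.2 b.2
    linarith
  rw [← ENNReal.coe_mul, ← ENNReal.coe_rpow_of_nonneg _ (by norm_num : (0:ℝ) ≤ 1/2)]
  calc ((((a*b) ^ ((1:ℝ)/2)) : ℝ≥0) : ℝ≥0∞) ≤ ((2⁻¹ * a + 2⁻¹ * b : ℝ≥0) : ℝ≥0∞) := by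
        exact_mod_cast h2
    _ = 2⁻¹ * (a:ℝ≥0∞) + 2⁻¹ * b := by push_cast; ring

lemma ennreal_amgm' (x y c : ℝ≥0∞) (hc0 : c ≠ 0) (hct : c ≠ ⊤) :
    (x*y) ^ ((1:ℝ)/2) ≤ 2⁻¹ * (c⁻¹ * x) + 2⁻¹ * (c * y) := by
  have : x * y = (c⁻¹ * x) * (c * y) := by
    rw [mul_mul_mul_comm, ENNReal.inv_mul_cancel hc0 hct, one_mul]
  rw [this]
  exact ennreal_amgm _ _

-- scaling
lemma lintegral_scale {l : ℝ} (hl : 0 < l) (g : ℝ → ℝ≥0∞) (hg : Measurable g) :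
    ∫⁻ u : ℝ, g (l * u) = (ENNReal.ofReal l)⁻¹ * ∫⁻ v : ℝ, g v := by
  have h0 : l ≠ 0 := hl.ne'
  have := lintegral_map (μ := (volume : Measure ℝ)) hg (measurable_const_mul l)
  rw [Real.map_volume_mul_left h0] at this
  rw [← this, lintegral_smul_measure, abs_inv, abs_of_pos hl,
    ENNReal.ofReal_inv_of_pos hl, smul_eq_mul]



lemma japbound (x : E3) {c : ℝ} (hc : 0 < c) :
    jap x ^ (-(2:ℝ)*c) ≤ 2^c * (1+‖x‖) ^ (-(2*c)) := by
  have ht : (0:ℝ) ≤ ‖x‖ := norm_nonneg x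
  have hj : 0 < jap x := Real.sqrt_pos.mpr (by positivity)
  have hs2 : (0:ℝ) < Real.sqrt 2 := by positivity
  have hkey : (1+‖x‖)/Real.sqrt 2 ≤ jap x := by
    rw [div_le_iff₀ hs2]
    have h1 : (1+‖x‖) = Real.sqrt ((1+‖x‖)^2) := (Real.sqrt_sq (by positivity)).symm
    rw [h1, jap, ← Real.sqrt_mul (by positivity)]
    apply Real.sqrt_le_sqrt
    nlinarith [sq_nonneg (1-‖x‖)]
  have hpos : (0:ℝ) < (1+‖x‖)/Real.sqrt 2 := by positivity
  have h2 : jap x ^ (-(2:ℝ)*c) ≤ ((1+‖x‖)/Real.sqrt 2) ^ (-(2:ℝ)*c) :=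
    Real.rpow_le_rpow_of_nonpos hpos hkey (by nlinarith)
  refine h2.trans_eq ?_
  rw [div_eq_mul_inv, Real.mul_rpow (by positivity) (by positivity),
    Real.inv_rpow (Real.sqrt_nonneg 2)]
  have h3 : (Real.sqrt 2 ^ (-(2:ℝ)*c))⁻¹ = Real.sqrt 2 ^ ((2:ℝ)*c) := by
    rw [← Real.rpow_neg (Real.sqrt_nonneg 2)]
    norm_num
  rw [h3]
  have h4 : Real.sqrt 2 ^ ((2:ℝ)*c) = 2^c := by
    rw [show ((2:ℝ)*c) = ((2:ℕ):ℝ)*c by norm_num, Real.rpow_natCast_mul (Real.sqrt_nonneg 2),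
      Real.sq_sqrt (by norm_num : (0:ℝ) ≤ 2)]
  rw [h4, show -(2:ℝ)*c = -(2*c) by ring]
  ring

lemma peetre {l u r s : ℝ} (hl0 : 0 < l) (hl1 : l ≤ 1) (hr : 0 ≤ r) (hs : 0 ≤ s) :
    (1+l*|u|)^s ≤ (1+l*|u+r|)^s * (1+r)^s := by
  rw [← Real.mul_rpow (by positivity) (by positivity)]
  apply Real.rpow_le_rpow (by positivity) ?_ hs
  have habs : |u| ≤ |u+r| + r := by
    calc |u| = |(u+r) + (-r)| := by congr 1; ring
      _ ≤ |u+r| + |(-r)| := abs_add_le _ _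
      _ = |u+r| + r := by rw [abs_neg, abs_of_nonneg hr]
  nlinarith [mul_le_mul_of_nonneg_left habs hl0.le, mul_nonneg (sub_nonneg.mpr hl1) hr,
    mul_nonneg (mul_nonneg hl0.le (abs_nonneg (u+r))) hr]

lemma tri {x y : E3} {s : ℝ} (hs : 0 ≤ s) : (1+‖x-y‖)^s ≤ (1+‖x‖)^s * (1+‖y‖)^s := by
  rw [← Real.mul_rpow (by positivity) (by positivity)]
  apply Real.rpow_le_rpow (by positivity) ?_ hs
  have := norm_sub_le x y
  nlinarith [mul_nonneg (norm_nonneg (x:E3)) (norm_nonneg (y:E3))]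

lemma key_pointwise {σ α s l : ℝ} (hσ : 0 < σ) (hα : 0 < α) (hs0 : 0 ≤ s)
    (hl0 : 0 < l) (hl1 : l ≤ 1) (h : ℝ → ℂ)
    (hh : ∀ u : ℝ, ‖h u‖ ≤ l * (1 + l * |u|) ^ (-(10:ℝ)))
    (u : ℝ) (x y : E3) :
    (1+l*|u|)^s * (jap x ^ (-(2:ℝ)*σ) * ‖h (u + ‖x-y‖)‖^2 * jap y ^ (-(2:ℝ)*α))
      ≤ ((2:ℝ)^σ * (1+‖x‖)^(s-2*σ)) * ((2:ℝ)^α * (1+‖y‖)^(s-2*α))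
        * (l^2 * (1+l*|u+‖x-y‖|)^(s-20)) := by
  have hr : (0:ℝ) ≤ ‖x - y‖ := norm_nonneg _
  set r := ‖x - y‖ with hrdef
  have hx1 : (0:ℝ) < 1 + ‖x‖ := by positivity
  have hy1 : (0:ℝ) < 1 + ‖y‖ := by positivity
  have hb : (0:ℝ) < 1 + l*|u+r| := by positivity
  have hH : ‖h (u+r)‖^2 ≤ l^2 * (1+l*|u+r|)^(-(20:ℝ)) := by
    have h1 : ‖h (u+r)‖^2 ≤ (l * (1+l*|u+r|)^(-(10:ℝ)))^2 :=
      pow_le_pow_left₀ (norm_nonneg _) (hh _) 2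
    refine h1.trans_eq ?_
    rw [mul_pow, ← Real.rpow_natCast ((1+l*|u+r|) ^ (-(10:ℝ))) 2, ← Real.rpow_mul hb.le]
    norm_num
  have hP : (1+l*|u|)^s ≤ (1+l*|u+r|)^s * ((1+‖x‖)^s * (1+‖y‖)^s) := by
    calc (1+l*|u|)^s ≤ (1+l*|u+r|)^s * (1+r)^s := peetre hl0 hl1 hr hs0
      _ ≤ (1+l*|u+r|)^s * ((1+‖x‖)^s * (1+‖y‖)^s) :=
          mul_le_mul_of_nonneg_left (tri hs0) (by positivity)
  have hW : jap x ^ (-(2:ℝ)*σ) ≤ 2^σ * (1+‖x‖)^(-(2*σ)) := japbound x hσ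
  have hV : jap y ^ (-(2:ℝ)*α) ≤ 2^α * (1+‖y‖)^(-(2*α)) := japbound y hα
  have hW0 : 0 ≤ jap x ^ (-(2:ℝ)*σ) := Real.rpow_nonneg (Real.sqrt_nonneg _) _
  have hV0 : 0 ≤ jap y ^ (-(2:ℝ)*α) := Real.rpow_nonneg (Real.sqrt_nonneg _) _
  have hH0 : (0:ℝ) ≤ ‖h (u+r)‖^2 := sq_nonneg _
  calc (1+l*|u|)^s * (jap x ^ (-(2:ℝ)*σ) * ‖h (u + r)‖^2 * jap y ^ (-(2:ℝ)*α))
      ≤ ((1+l*|u+r|)^s * ((1+‖x‖)^s * (1+‖y‖)^s)) *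
        ((2^σ * (1+‖x‖)^(-(2*σ))) * (l^2 * (1+l*|u+r|)^(-(20:ℝ))) * (2^α * (1+‖y‖)^(-(2*α)))) := by
        apply mul_le_mul hP ?_ ?_ (by positivity)
        · apply mul_le_mul (mul_le_mul hW hH hH0 (by positivity)) hV hV0 (by positivity)
        · exact mul_nonneg (mul_nonneg hW0 hH0) hV0
    _ = ((2:ℝ)^σ * (1+‖x‖)^(s-2*σ)) * ((2:ℝ)^α * (1+‖y‖)^(s-2*α))
        * (l^2 * (1+l*|u+r|)^(s-20)) := by
        have ex : (1+‖x‖)^(s-2*σ) = (1+‖x‖)^s * (1+‖x‖)^(-(2*σ)) := by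
          rw [← Real.rpow_add hx1]; ring_nf
        have ey : (1+‖y‖)^(s-2*α) = (1+‖y‖)^s * (1+‖y‖)^(-(2*α)) := by
          rw [← Real.rpow_add hy1]; ring_nf
        have eu : (1+l*|u+r|)^(s-20) = (1+l*|u+r|)^s * (1+l*|u+r|)^(-(20:ℝ)) := by
          rw [← Real.rpow_add hb]; ring_nf
        rw [ex, ey, eu]; ring

theorem stmt_14 (σ α : ℝ) (hσ : 2 < σ) (hα : 2 < α) :
    ∃ C : ℝ, ∀ lam0 : ℝ, lam0 ∈ Set.Ioc (0 : ℝ) 1 → ∀ h : ℝ → ℂ, Measurable h →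
      (∀ u : ℝ, ‖h u‖ ≤ lam0 * (1 + lam0 * |u|) ^ (-(10 : ℝ))) →
      (∫⁻ u : ℝ, (∫⁻ x : E3, ∫⁻ y : E3,
          ENNReal.ofReal (jap x ^ (-(2 : ℝ) * σ) * ‖h (u + ‖x - y‖)‖ ^ 2 *
            jap y ^ (-(2 : ℝ) * α))) ^ ((1 : ℝ) / 2))
        ≤ ENNReal.ofReal C := by
  -- choice of exponent
  set s : ℝ := min (σ-1) (min (α-1) 2) with hs_def
  have hs1 : 1 < s := lt_min (by linarith) (lt_min (by linarith) one_lt_two)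
  have hs0 : (0:ℝ) ≤ s := by linarith
  have hsle2 : s ≤ 2 := (min_le_right _ _).trans (min_le_right _ _)
  have hsσ : (3:ℝ) < 2*σ - s := by
    have := min_le_left (σ-1) (min (α-1) 2); linarith
  have hsα : (3:ℝ) < 2*α - s := by
    have := (min_le_right (σ-1) (min (α-1) 2)).trans (min_le_left (α-1) 2); linarith
  -- the weight functions and constants
  set φ : E3 → ℝ := fun x => (2:ℝ)^σ * (1+‖x‖) ^ (s - 2*σ) with hφ_def
  set ψ : E3 → ℝ := fun y => (2:ℝ)^α * (1+‖y‖) ^ (s - 2*α) with hψ_def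
  set g20 : ℝ → ℝ≥0∞ := fun v => ENNReal.ofReal ((1+|v|) ^ (s-20)) with hg20_def
  set gs : ℝ → ℝ≥0∞ := fun v => ENNReal.ofReal ((1+|v|) ^ (-s)) with hgs_def
  have hdim3 : (Module.finrank ℝ E3 : ℝ) = 3 := by
    simp [finrank_euclideanSpace_fin]
  have hdim1 : (Module.finrank ℝ ℝ : ℝ) = 1 := by simp
  have hφ_int : Integrable φ := by
    have h1 : Integrable (fun x : E3 => (1+‖x‖)^(-(2*σ - s))) :=
      integrable_one_add_norm (by rw [hdim3]; linarith)
    simp only [neg_sub] at h1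
    exact h1.const_mul _
  have hψ_int : Integrable ψ := by
    have h1 : Integrable (fun y : E3 => (1+‖y‖)^(-(2*α - s))) :=
      integrable_one_add_norm (by rw [hdim3]; linarith)
    simp only [neg_sub] at h1
    exact h1.const_mul _
  have h20_int : Integrable (fun v : ℝ => (1+|v|)^(s-20)) := by
    have h1 : Integrable (fun v : ℝ => (1+‖v‖)^(-(20 - s))) :=
      integrable_one_add_norm (by rw [hdim1]; linarith)
    simp only [neg_sub, Real.norm_eq_abs] at h1
    exact h1
  have hs_int : Integrable (fun v : ℝ => (1+|v|)^(-s)) := by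
    have h1 : Integrable (fun v : ℝ => (1+‖v‖)^(-s)) :=
      integrable_one_add_norm (by rw [hdim1]; linarith)
    simpa only [Real.norm_eq_abs] using h1
  set Jφ := ∫⁻ x : E3, ENNReal.ofReal (φ x) with hJφ_def
  set Jψ := ∫⁻ y : E3, ENNReal.ofReal (ψ y) with hJψ_def
  set J20 := ∫⁻ v : ℝ, g20 v with hJ20_def
  set Js := ∫⁻ v : ℝ, gs v with hJs_def
  have hJφt : Jφ ≠ ⊤ := by
    rw [hJφ_def, ← ofReal_integral_eq_lintegral_ofReal hφ_int
      (ae_of_all _ fun x => by positivity)]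
    exact ENNReal.ofReal_ne_top
  have hJψt : Jψ ≠ ⊤ := by
    rw [hJψ_def, ← ofReal_integral_eq_lintegral_ofReal hψ_int
      (ae_of_all _ fun x => by positivity)]
    exact ENNReal.ofReal_ne_top
  have hJ20t : J20 ≠ ⊤ := by
    rw [hJ20_def, hg20_def, ← ofReal_integral_eq_lintegral_ofReal h20_int
      (ae_of_all _ fun x => by positivity)]
    exact ENNReal.ofReal_ne_top
  have hJst : Js ≠ ⊤ := by
    rw [hJs_def, hgs_def, ← ofReal_integral_eq_lintegral_ofReal hs_int
      (ae_of_all _ fun x => by positivity)]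
    exact ENNReal.ofReal_ne_top
  set K : ℝ≥0∞ := 2⁻¹ * (Jφ * Jψ * J20) + 2⁻¹ * Js with hK_def
  have hKt : K ≠ ⊤ := by
    rw [hK_def]
    refine ENNReal.add_ne_top.mpr ⟨?_, ?_⟩
    · exact ENNReal.mul_ne_top (by simp)
        (ENNReal.mul_ne_top (ENNReal.mul_ne_top hJφt hJψt) hJ20t)
    · exact ENNReal.mul_ne_top (by simp) hJst
  refine ⟨K.toReal, ?_⟩
  rintro l ⟨hl0, hl1⟩ h hmeas hh
  rw [ENNReal.ofReal_toReal hKt]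
  -- notation
  set L : ℝ≥0∞ := ENNReal.ofReal l with hL_def
  have hL0 : L ≠ 0 := (ENNReal.ofReal_pos.mpr hl0).ne'
  have hLt : L ≠ ⊤ := ENNReal.ofReal_ne_top
  set A : ℝ → ℝ≥0∞ := fun u => ENNReal.ofReal ((1+l*|u|)^s) with hA_def
  have hA0 : ∀ u, A u ≠ 0 := fun u => (ENNReal.ofReal_pos.mpr (by positivity)).ne'
  have hAt : ∀ u, A u ≠ ⊤ := fun u => ENNReal.ofReal_ne_top
  have hAm : Measurable A := by
    apply ENNReal.measurable_ofReal.comp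
    fun_prop
  have hg20m : Measurable g20 := by
    apply ENNReal.measurable_ofReal.comp
    fun_prop
  have hgsm : Measurable gs := by
    apply ENNReal.measurable_ofReal.comp
    fun_prop
  set G : ℝ → ℝ≥0∞ := fun u => ∫⁻ x : E3, ∫⁻ y : E3,
      ENNReal.ofReal (jap x ^ (-(2 : ℝ) * σ) * ‖h (u + ‖x - y‖)‖ ^ 2 *
        jap y ^ (-(2 : ℝ) * α)) with hG_def
  -- Step 1 : pointwise AM-GM
  have step1 : ∀ u, (G u) ^ ((1:ℝ)/2) ≤ 2⁻¹ * (L⁻¹ * (A u * G u)) + 2⁻¹ * (L * (A u)⁻¹) := by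
    intro u
    have h1 : (A u * G u) * (A u)⁻¹ = G u := by
      rw [mul_comm (A u) (G u), mul_assoc, ENNReal.mul_inv_cancel (hA0 u) (hAt u), mul_one]
    calc (G u)^((1:ℝ)/2) = ((A u * G u) * (A u)⁻¹)^((1:ℝ)/2) := by rw [h1]
      _ ≤ _ := ennreal_amgm' _ _ L hL0 hLt
  -- Step 3 : the easy integral
  have step3 : ∫⁻ u : ℝ, (A u)⁻¹ = L⁻¹ * Js := by
    have h1 : ∀ u : ℝ, (A u)⁻¹ = gs (l * u) := by
      intro u
      rw [hA_def, hgs_def]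
      simp only
      rw [abs_mul, abs_of_pos hl0, ← ENNReal.ofReal_inv_of_pos (by positivity),
        ← Real.rpow_neg (by positivity)]
    rw [lintegral_congr h1, lintegral_scale hl0 gs hgsm, hJs_def]
  -- the translated-scaled integral
  have hu_int : ∀ r : ℝ, ∫⁻ u : ℝ, g20 (l*(u+r)) = L⁻¹ * J20 := by
    intro r
    have h1 : ∫⁻ u : ℝ, g20 (l*(u+r)) = ∫⁻ w : ℝ, g20 (l*w) :=
      lintegral_add_right_eq_self (fun w => g20 (l*w)) r
    rw [h1, lintegral_scale hl0 g20 hg20m, hJ20_def, hL_def]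
  -- Step 4
  set B : ℝ → E3 → E3 → ℝ≥0∞ := fun u x y =>
    (ENNReal.ofReal (φ x) * ENNReal.ofReal (ψ y) * ENNReal.ofReal (l^2))
      * g20 (l*(u+‖x-y‖)) with hB_def
  clear_value B
  have hBmaster : Measurable (fun q : ℝ × E3 × E3 => B q.1 q.2.1 q.2.2) := by
    simp only [hB_def]
    refine Measurable.mul (f := fun q : ℝ × E3 × E3 => ENNReal.ofReal (φ q.2.1) * ENNReal.ofReal (ψ q.2.2) * ENNReal.ofReal (l ^ 2)) (g := fun q : ℝ × E3 × E3 => g20 (l * (q.1 + ‖q.2.1 - q.2.2‖))) ?_ ?_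
    · fun_prop
    · exact hg20m.comp (by fun_prop)
  have step4 : ∫⁻ u : ℝ, A u * G u ≤ L * (Jφ * Jψ * J20) := by
    have pointwise : ∀ u, A u * G u ≤ ∫⁻ x : E3, ∫⁻ y : E3, B u x y := by
      intro u
      simp only [hG_def]
      rw [← lintegral_const_mul' (A u) _ (hAt u)]
      apply lintegral_mono
      intro x
      dsimp only
      rw [← lintegral_const_mul' (A u) _ (hAt u)]
      apply lintegral_mono
      intro y
      dsimp only
      have hkey := key_pointwise (by linarith : (0:ℝ) < σ) (by linarith : (0:ℝ) < α)
        hs0 hl0 hl1 h hh u x y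
      calc A u * ENNReal.ofReal (jap x ^ (-(2 : ℝ) * σ) * ‖h (u + ‖x - y‖)‖ ^ 2 *
              jap y ^ (-(2 : ℝ) * α))
          = ENNReal.ofReal ((1+l*|u|)^s * (jap x ^ (-(2 : ℝ) * σ) * ‖h (u + ‖x - y‖)‖ ^ 2 *
              jap y ^ (-(2 : ℝ) * α))) := by
            rw [hA_def, ← ENNReal.ofReal_mul (by positivity)]
        _ ≤ ENNReal.ofReal (((2:ℝ)^σ * (1+‖x‖)^(s-2*σ)) * ((2:ℝ)^α * (1+‖y‖)^(s-2*α))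
              * (l^2 * (1+l*|u+‖x-y‖|)^(s-20))) := ENNReal.ofReal_le_ofReal hkey
        _ = B u x y := by
            simp only [hB_def, hφ_def, hψ_def, hg20_def]
            rw [abs_mul, abs_of_pos hl0]
            rw [show ((2:ℝ)^σ * (1+‖x‖)^(s-2*σ)) * ((2:ℝ)^α * (1+‖y‖)^(s-2*α))
                * (l^2 * (1+l*|u+‖x-y‖|)^(s-20))
              = ((((2:ℝ)^σ * (1+‖x‖)^(s-2*σ)) * ((2:ℝ)^α * (1+‖y‖)^(s-2*α))) * l^2)
                * (1+l*|u+‖x-y‖|)^(s-20) from by ring]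
            rw [ENNReal.ofReal_mul (by positivity), ENNReal.ofReal_mul (by positivity),
              ENNReal.ofReal_mul (by positivity)]
    have hswap : ∫⁻ u : ℝ, ∫⁻ x : E3, ∫⁻ y : E3, B u x y
        = ∫⁻ p : E3 × E3, (∫⁻ u : ℝ, B u p.1 p.2) ∂(volume.prod volume) := by
      have e1 : ∀ u : ℝ, (∫⁻ x : E3, ∫⁻ y : E3, B u x y)
          = ∫⁻ p : E3 × E3, B u p.1 p.2 ∂(volume.prod volume) := by
        intro u
        refine lintegral_lintegral (Measurable.aemeasurable ?_)
        rw [Function.uncurry_def]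
        exact hBmaster.comp (measurable_const.prodMk measurable_id)
      rw [lintegral_congr e1]
      refine lintegral_lintegral_swap (Measurable.aemeasurable ?_)
      rw [Function.uncurry_def]
      exact hBmaster
    calc ∫⁻ u : ℝ, A u * G u ≤ ∫⁻ u : ℝ, ∫⁻ x : E3, ∫⁻ y : E3, B u x y :=
          lintegral_mono pointwise
      _ = ∫⁻ p : E3 × E3, (∫⁻ u : ℝ, B u p.1 p.2) ∂(volume.prod volume) := hswap
      _ = ∫⁻ p : E3 × E3, (ENNReal.ofReal (φ p.1) * ENNReal.ofReal (ψ p.2))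
            * (ENNReal.ofReal (l^2) * (L⁻¹ * J20)) ∂(volume.prod volume) := by
          apply lintegral_congr
          intro p
          simp only [hB_def]
          rw [lintegral_const_mul' _ _ (ENNReal.mul_ne_top
            (ENNReal.mul_ne_top ENNReal.ofReal_ne_top ENNReal.ofReal_ne_top)
            ENNReal.ofReal_ne_top), hu_int ‖p.1 - p.2‖]
          ring
      _ = (Jφ * Jψ) * (ENNReal.ofReal (l^2) * (L⁻¹ * J20)) := by
          have hfm : AEMeasurable (fun x : E3 => ENNReal.ofReal (φ x)) volume := by fun_prop
          have hgm : AEMeasurable (fun y : E3 => ENNReal.ofReal (ψ y)) volume := by fun_prop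
          rw [lintegral_mul_const' _ _ (ENNReal.mul_ne_top ENNReal.ofReal_ne_top
            (ENNReal.mul_ne_top (ENNReal.inv_ne_top.mpr hL0) hJ20t))]
          rw [lintegral_prod_mul hfm hgm]
      _ = L * (Jφ * Jψ * J20) := by
          have e2 : ENNReal.ofReal (l^2) = L * L := by
            rw [hL_def, sq, ENNReal.ofReal_mul hl0.le]
          rw [e2, mul_comm L L, mul_assoc L L _, ← mul_assoc L L⁻¹, 
            ENNReal.mul_inv_cancel hL0 hLt, one_mul]
          ring
  -- assemble
  have hmeas2 : Measurable (fun u : ℝ => 2⁻¹ * (L * (A u)⁻¹)) :=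
    ((hAm.inv).const_mul L).const_mul 2⁻¹
  calc ∫⁻ u : ℝ, (G u) ^ ((1:ℝ)/2)
      ≤ ∫⁻ u : ℝ, (2⁻¹ * (L⁻¹ * (A u * G u)) + 2⁻¹ * (L * (A u)⁻¹)) :=
        lintegral_mono step1
    _ = (∫⁻ u : ℝ, 2⁻¹ * (L⁻¹ * (A u * G u))) + ∫⁻ u : ℝ, 2⁻¹ * (L * (A u)⁻¹) :=
        lintegral_add_right _ hmeas2
    _ = 2⁻¹ * L⁻¹ * (∫⁻ u : ℝ, A u * G u) + 2⁻¹ * L * (∫⁻ u : ℝ, (A u)⁻¹) := by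
        rw [show (fun u : ℝ => 2⁻¹ * (L⁻¹ * (A u * G u))) = fun u : ℝ => (2⁻¹ * L⁻¹) * (A u * G u) by
          funext u; ring, lintegral_const_mul' _ _ (ENNReal.mul_ne_top (by simp)
            (ENNReal.inv_ne_top.mpr hL0))]
        rw [show (fun u : ℝ => 2⁻¹ * (L * (A u)⁻¹)) = fun u : ℝ => (2⁻¹ * L) * (A u)⁻¹ by
          funext u; ring, lintegral_const_mul' _ _ (ENNReal.mul_ne_top (by simp) hLt)]
    _ ≤ 2⁻¹ * L⁻¹ * (L * (Jφ * Jψ * J20)) + 2⁻¹ * L * (L⁻¹ * Js) := by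
        rw [step3]
        exact add_le_add_left (mul_le_mul_right step4 _) _
    _ = K := by
        rw [hK_def]
        rw [mul_assoc (2⁻¹) L⁻¹ _, ← mul_assoc L⁻¹ L _, ENNReal.inv_mul_cancel hL0 hLt, one_mul]
        rw [mul_assoc (2⁻¹) L _, ← mul_assoc L L⁻¹ _, ENNReal.mul_inv_cancel hL0 hLt, one_mul]
end
end

section
/- Let β > 3, let V : ℝ³ → ℂ be measurable with |V(x)| ≤ C₀ ⟨x⟩^{-β} for all x, and let −5/2 ≤ σ < −3/2. Then ∫_{ℝ³} ∫_{ℝ³} ⟨x⟩^{2(σ+1)} |V(y)|² / |x − y|² · ⟨y⟩^{-2σ} dx dy < ∞. -/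
open MeasureTheory

noncomputable section

lemma one_le_jap (x : E3) : 1 ≤ jap x := by
  have h : (1:ℝ) ≤ 1 + ‖x‖ ^ 2 := by nlinarith [sq_nonneg ‖x‖]
  have := Real.sqrt_le_sqrt h
  rwa [Real.sqrt_one] at this

lemma jap_pos (x : E3) : 0 < jap x := lt_of_lt_of_le one_pos (one_le_jap x)

lemma jap_sq (x : E3) : jap x ^ 2 = 1 + ‖x‖ ^ 2 :=
  Real.sq_sqrt (by positivity)

lemma jap_continuous : Continuous jap := by
  unfold jap; fun_prop

lemma jap_meas_rpow (r : ℝ) : Measurable fun x : E3 => jap x ^ r :=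
  (jap_continuous.measurable).pow_const r

/-- Peetre type inequality. -/
lemma jap_peetre (a b : E3) : jap a ≤ Real.sqrt 2 * jap b * jap (a - b) := by
  have h : ‖a‖ ≤ ‖b‖ + ‖a - b‖ := by
    have := norm_add_le (b) (a - b); simpa using this
  rw [jap, jap, jap, ← Real.sqrt_mul (by norm_num), ← Real.sqrt_mul (by positivity)]
  apply Real.sqrt_le_sqrt
  nlinarith [norm_nonneg a, norm_nonneg b, norm_nonneg (a - b), sq_nonneg (‖b‖ - ‖a - b‖),
    sq_nonneg (‖b‖ * ‖a - b‖)]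

lemma jap_rpow_eq (x : E3) (r : ℝ) : jap x ^ r = ((1:ℝ) + ‖x‖ ^ 2) ^ (r / 2) := by
  rw [jap, Real.sqrt_eq_rpow, ← Real.rpow_mul (by positivity)]
  ring_nf

lemma japFinite {p : ℝ} (hp : 3 < p) :
    (∫⁻ x : E3, ENNReal.ofReal (jap x ^ (-p))) < ⊤ := by
  have h : (Module.finrank ℝ E3 : ℝ) < p := by
    rw [finrank_euclideanSpace_fin]; exact_mod_cast hp
  have := (integrable_rpow_neg_one_add_norm_sq (μ := (volume : Measure E3)) h).lintegral_lt_top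
  refine lt_of_eq_of_lt ?_ this
  apply lintegral_congr
  intro x
  congr 1
  rw [jap_rpow_eq]

/-- The singular kernel `1/‖z‖²` restricted to the unit ball. -/
def sker (z : E3) : ℝ := (Metric.closedBall (0:E3) 1).indicator (fun z => 1 / ‖z‖ ^ 2) z

lemma sker_nonneg (z : E3) : 0 ≤ sker z := by
  unfold sker
  apply Set.indicator_nonneg
  intro z _
  positivity

lemma sker_meas : Measurable sker := by
  apply Measurable.indicator _ measurableSet_closedBall
  exact Measurable.div measurable_const ((continuous_norm.measurable).pow_const 2)

lemma sker_lt_top : (∫⁻ z : E3, ENNReal.ofReal (sker z)) < ⊤ := by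
  have h_meas : AEMeasurable sker volume := sker_meas.aemeasurable
  rw [lintegral_eq_lintegral_meas_le volume (Filter.Eventually.of_forall sker_nonneg) h_meas]
  set mB := volume (Metric.ball (0:E3) 1) with hmB
  have hmBlt : mB < ⊤ := measure_ball_lt_top
  have key : ∀ t ∈ Set.Ioi (0:ℝ), volume {a : E3 | t ≤ sker a}
      ≤ ENNReal.ofReal ((min 1 (Real.sqrt t⁻¹)) ^ 3) * mB := by
    intro t ht
    rw [Set.mem_Ioi] at ht
    have hsub : {a : E3 | t ≤ sker a} ⊆ Metric.closedBall 0 (min 1 (Real.sqrt t⁻¹)) := by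
      intro a ha
      rw [Set.mem_setOf_eq] at ha
      by_cases hmem : a ∈ Metric.closedBall (0:E3) 1
      · rw [sker, Set.indicator_of_mem hmem] at ha
        have hna : 0 < ‖a‖ := by
          rcases eq_or_lt_of_le (norm_nonneg a) with h0 | h0
          · exfalso; rw [← h0] at ha; norm_num at ha; linarith
          · exact h0
        have h1 : ‖a‖ ^ 2 ≤ t⁻¹ := by
          rw [le_div_iff₀ (by positivity)] at ha
          rw [← one_div]
          rw [le_div_iff₀ ht]
          linarith [ha]
        have h2 : ‖a‖ ≤ Real.sqrt t⁻¹ := Real.le_sqrt' hna |>.mpr h1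
        have h3 : ‖a‖ ≤ 1 := by simpa using Metric.mem_closedBall.mp hmem
        rw [Metric.mem_closedBall, dist_zero_right]
        exact le_min h3 h2
      · rw [sker, Set.indicator_of_notMem hmem] at ha
        linarith
    calc volume {a : E3 | t ≤ sker a} ≤ volume (Metric.closedBall (0:E3) (min 1 (Real.sqrt t⁻¹))) :=
          measure_mono hsub
      _ = ENNReal.ofReal ((min 1 (Real.sqrt t⁻¹)) ^ Module.finrank ℝ E3) * mB := by
          rw [Measure.addHaar_closedBall _ _ (le_min zero_le_one (Real.sqrt_nonneg _))]
      _ = ENNReal.ofReal ((min 1 (Real.sqrt t⁻¹)) ^ 3) * mB := by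
          rw [finrank_euclideanSpace_fin]
  calc ∫⁻ t in Set.Ioi (0:ℝ), volume {a : E3 | t ≤ sker a}
      ≤ ∫⁻ t in Set.Ioi (0:ℝ), ENNReal.ofReal ((min 1 (Real.sqrt t⁻¹)) ^ 3) * mB :=
        setLIntegral_mono' measurableSet_Ioi key
    _ ≤ ∫⁻ t in Set.Ioc (0:ℝ) 1 ∪ Set.Ioi 1, ENNReal.ofReal ((min 1 (Real.sqrt t⁻¹)) ^ 3) * mB :=
        lintegral_mono_set Set.Ioi_subset_Ioc_union_Ioi
    _ ≤ (∫⁻ t in Set.Ioc (0:ℝ) 1, ENNReal.ofReal ((min 1 (Real.sqrt t⁻¹)) ^ 3) * mB)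
        + ∫⁻ t in Set.Ioi (1:ℝ), ENNReal.ofReal ((min 1 (Real.sqrt t⁻¹)) ^ 3) * mB :=
        lintegral_union_le _ _ _
    _ < ⊤ := by
        apply ENNReal.add_lt_top.mpr
        constructor
        · calc (∫⁻ t in Set.Ioc (0:ℝ) 1, ENNReal.ofReal ((min 1 (Real.sqrt t⁻¹)) ^ 3) * mB)
              ≤ ∫⁻ _ in Set.Ioc (0:ℝ) 1, mB := by
                apply setLIntegral_mono' measurableSet_Ioc
                intro t _
                have h1 : (min 1 (Real.sqrt t⁻¹)) ^ 3 ≤ 1 := by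
                  apply pow_le_one₀ (le_min zero_le_one (Real.sqrt_nonneg _)) (min_le_left _ _)
                calc ENNReal.ofReal ((min 1 (Real.sqrt t⁻¹)) ^ 3) * mB
                    ≤ ENNReal.ofReal 1 * mB := by
                      gcongr
                  _ = mB := by simp
            _ = mB * volume (Set.Ioc (0:ℝ) 1) := setLIntegral_const _ _
            _ < ⊤ := by
                rw [Real.volume_Ioc]
                exact ENNReal.mul_lt_top hmBlt (by norm_num)
        · calc (∫⁻ t in Set.Ioi (1:ℝ), ENNReal.ofReal ((min 1 (Real.sqrt t⁻¹)) ^ 3) * mB)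
              ≤ ∫⁻ t in Set.Ioi (1:ℝ), ENNReal.ofReal (t ^ (-(3:ℝ)/2)) * mB := by
                apply setLIntegral_mono' measurableSet_Ioi
                intro t ht
                rw [Set.mem_Ioi] at ht
                have ht0 : (0:ℝ) < t := lt_trans one_pos ht
                have h1 : (min 1 (Real.sqrt t⁻¹)) ^ 3 ≤ t ^ (-(3:ℝ)/2) := by
                  have h2 : (min 1 (Real.sqrt t⁻¹)) ^ 3 ≤ (Real.sqrt t⁻¹) ^ 3 := by
                    apply pow_le_pow_left₀ (le_min zero_le_one (Real.sqrt_nonneg _))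
                      (min_le_right _ _)
                  refine h2.trans_eq ?_
                  rw [Real.sqrt_eq_rpow, ← Real.rpow_natCast (t⁻¹ ^ ((1:ℝ)/2)) 3,
                    ← Real.rpow_mul (by positivity), ← Real.rpow_neg_one t,
                    ← Real.rpow_mul (le_of_lt ht0)]
                  norm_num
                gcongr
            _ = (∫⁻ t in Set.Ioi (1:ℝ), ENNReal.ofReal (t ^ (-(3:ℝ)/2))) * mB :=
                lintegral_mul_const' _ _ hmBlt.ne
            _ < ⊤ := by
                apply ENNReal.mul_lt_top _ hmBlt
                exact (integrableOn_Ioi_rpow_of_lt (by norm_num) one_pos).setLIntegral_lt_top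

lemma jap_far (x y : E3) (h : 2 * jap y ≤ jap x) : jap x ≤ 3 * ‖x - y‖ := by
  have hu := jap_sq y
  have hv := jap_sq x
  have h2 : 2 ≤ jap x := le_trans (by linarith [one_le_jap y]) h
  have htri : ‖x‖ ≤ ‖y‖ + ‖x - y‖ := by
    have := norm_add_le y (x - y); simpa using this
  have hy2 : 4 * (1 + ‖y‖ ^ 2) ≤ jap x ^ 2 := by nlinarith [jap_pos y, jap_pos x]
  have hu2 : ‖y‖ ≤ jap x / 2 := by nlinarith [norm_nonneg y, jap_pos x]
  have hsq : (jap x + 3 * ‖y‖) ^ 2 ≤ (3 * ‖x‖) ^ 2 := by nlinarith [norm_nonneg y, jap_pos x]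
  have h3v : jap x + 3 * ‖y‖ ≤ 3 * ‖x‖ := by
    have h0 : 0 ≤ jap x + 3 * ‖y‖ := by positivity
    have h0' : (0:ℝ) ≤ 3 * ‖x‖ := by positivity
    exact (pow_le_pow_iff_left₀ h0 h0' two_ne_zero).mp hsq
  linarith

lemma pointwise_bound (q δ : ℝ) (hq : 1 < q) (hδ : 0 < δ) (hδq : δ ≤ (q - 1) / 2)
    (x y : E3) :
    jap y ^ (-q) / ‖x - y‖ ^ 2 ≤
      2 ^ q * jap x ^ (-q) * sker (y - x)
      + 9 * jap x ^ (1 + δ - min q (3 + δ)) * jap y ^ (-(3 + δ))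
      + 2 ^ (q - 1 - δ + 1) * jap x ^ (-(q - 1 - δ)) *
          (jap y ^ (-(3 + δ)) + jap (y - x) ^ (-(3 + δ))) := by
  set K := jap x with hK
  set L := jap y with hL
  have hKpos : 0 < K := jap_pos x
  have hLpos : 0 < L := jap_pos y
  have hK1 : 1 ≤ K := one_le_jap x
  have hL1 : 1 ≤ L := one_le_jap y
  have hnorm : ‖y - x‖ = ‖x - y‖ := norm_sub_rev _ _
  have hterm2 : (0:ℝ) ≤ 9 * K ^ (1 + δ - min q (3 + δ)) * L ^ (-(3 + δ)) := by positivity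
  have hterm3 : (0:ℝ) ≤ 2 ^ (q - 1 - δ + 1) * K ^ (-(q - 1 - δ)) *
      (L ^ (-(3 + δ)) + jap (y - x) ^ (-(3 + δ))) :=
    mul_nonneg (mul_nonneg (Real.rpow_nonneg (by norm_num) _) (Real.rpow_nonneg hKpos.le _))
      (add_nonneg (Real.rpow_nonneg hLpos.le _) (Real.rpow_nonneg (jap_pos _).le _))
  have hterm1 : (0:ℝ) ≤ 2 ^ q * K ^ (-q) * sker (y - x) :=
    mul_nonneg (by positivity) (sker_nonneg _)
  rcases le_or_gt ‖x - y‖ 1 with h1 | h1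
  · -- near region
    have hmem : y - x ∈ Metric.closedBall (0:E3) 1 := by
      rw [Metric.mem_closedBall, dist_zero_right, hnorm]; exact h1
    have hsker : sker (y - x) = 1 / ‖x - y‖ ^ 2 := by
      rw [sker, Set.indicator_of_mem hmem, hnorm]
    have hKL : K ≤ 2 * L := by
      have hp := jap_peetre x y
      have hj : jap (x - y) ≤ Real.sqrt 2 := by
        rw [jap]
        apply Real.sqrt_le_sqrt
        nlinarith [norm_nonneg (x - y), sq_nonneg (1 - ‖x - y‖)]
      calc K ≤ Real.sqrt 2 * L * jap (x - y) := hp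
        _ ≤ Real.sqrt 2 * L * Real.sqrt 2 :=
            mul_le_mul_of_nonneg_left hj (by positivity)
        _ = 2 * L := by
            rw [show Real.sqrt 2 * L * Real.sqrt 2 = Real.sqrt 2 * Real.sqrt 2 * L by ring,
              Real.mul_self_sqrt (by norm_num)]
    have hLq : L ^ (-q) ≤ 2 ^ q * K ^ (-q) := by
      have hhalf : K / 2 ≤ L := by linarith
      calc L ^ (-q) ≤ (K / 2) ^ (-q) :=
            Real.rpow_le_rpow_of_nonpos (by positivity) hhalf (by linarith)
        _ = K ^ (-q) / 2 ^ (-q) :=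
            Real.div_rpow (le_of_lt hKpos) (by norm_num) _
        _ = 2 ^ q * K ^ (-q) := by
            rw [Real.rpow_neg (by norm_num : (0:ℝ) ≤ 2), div_eq_mul_inv, inv_inv]; ring
    calc L ^ (-q) / ‖x - y‖ ^ 2 = L ^ (-q) * (1 / ‖x - y‖ ^ 2) := div_eq_mul_one_div _ _
      _ ≤ (2 ^ q * K ^ (-q)) * (1 / ‖x - y‖ ^ 2) :=
          mul_le_mul_of_nonneg_right hLq (by positivity)
      _ = 2 ^ q * K ^ (-q) * sker (y - x) := by rw [hsker]
      _ ≤ _ := by linarith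
  · -- far region
    have hr0 : (0:ℝ) < ‖x - y‖ := lt_trans one_pos h1
    rcases le_or_gt (2 * L) K with h2 | h2
    · -- region 2: 2L ≤ K
      have hq' : min q (3 + δ) ≤ q := min_le_left _ _
      have hq'' : min q (3 + δ) ≤ 3 + δ := min_le_right _ _
      have hLK : L ≤ K := by linarith
      have hK3r : K ≤ 3 * ‖x - y‖ := jap_far x y h2
      have step1 : L ^ (-q) ≤ L ^ (-min q (3 + δ)) :=
        Real.rpow_le_rpow_of_exponent_le hL1 (by linarith)
      have step2 : L ^ (-min q (3 + δ)) = L ^ (-(3 + δ)) * L ^ (3 + δ - min q (3 + δ)) := by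
        rw [← Real.rpow_add hLpos]; congr 1; ring
      have step3 : L ^ (3 + δ - min q (3 + δ)) ≤ K ^ (3 + δ - min q (3 + δ)) :=
        Real.rpow_le_rpow (le_of_lt hLpos) hLK (by linarith)
      have step13 : L ^ (-q) ≤ L ^ (-(3 + δ)) * K ^ (3 + δ - min q (3 + δ)) := by
        refine step1.trans ?_
        rw [step2]
        exact mul_le_mul_of_nonneg_left step3 (by positivity)
      have hrp : K ^ (-(2:ℝ)) = (K ^ 2)⁻¹ := by
        rw [show (-(2:ℝ)) = -((2:ℕ):ℝ) by norm_num, Real.rpow_neg (le_of_lt hKpos),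
          Real.rpow_natCast]
      have step4 : 1 / ‖x - y‖ ^ 2 ≤ 9 * K ^ (-(2:ℝ)) := by
        rw [hrp, show (9:ℝ) * (K ^ 2)⁻¹ = 9 / K ^ 2 by ring,
          div_le_div_iff₀ (by positivity) (by positivity)]
        nlinarith
      calc L ^ (-q) / ‖x - y‖ ^ 2 = L ^ (-q) * (1 / ‖x - y‖ ^ 2) := div_eq_mul_one_div _ _
        _ ≤ (L ^ (-(3 + δ)) * K ^ (3 + δ - min q (3 + δ))) * (9 * K ^ (-(2:ℝ))) := by
            apply mul_le_mul step13 step4 (by positivity) (by positivity)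
        _ = 9 * (K ^ (3 + δ - min q (3 + δ)) * K ^ (-(2:ℝ))) * L ^ (-(3 + δ)) := by ring
        _ = 9 * K ^ (1 + δ - min q (3 + δ)) * L ^ (-(3 + δ)) := by
            rw [← Real.rpow_add hKpos, show 3 + δ - min q (3 + δ) + -(2:ℝ)
              = 1 + δ - min q (3 + δ) by ring]
        _ ≤ _ := by linarith
    · -- region 3
      have hc' : 0 ≤ q - 1 - δ := by linarith
      have hKL2 : K / 2 < L := by linarith
      have split : L ^ (-q) = L ^ (-(q - 1 - δ)) * L ^ (-(1 + δ)) := by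
        rw [← Real.rpow_add hLpos]; congr 1; ring
      have e1 : L ^ (-(q - 1 - δ)) ≤ 2 ^ (q - 1 - δ) * K ^ (-(q - 1 - δ)) := by
        calc L ^ (-(q - 1 - δ)) ≤ (K / 2) ^ (-(q - 1 - δ)) :=
              Real.rpow_le_rpow_of_nonpos (by positivity) (le_of_lt hKL2) (by linarith)
          _ = K ^ (-(q - 1 - δ)) / 2 ^ (-(q - 1 - δ)) :=
              Real.div_rpow (le_of_lt hKpos) (by norm_num) _
          _ = 2 ^ (q - 1 - δ) * K ^ (-(q - 1 - δ)) := by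
              rw [Real.rpow_neg (by norm_num : (0:ℝ) ≤ 2), div_eq_mul_inv, inv_inv]; ring
      have hjrp : jap (y - x) ^ (-(2:ℝ)) = (jap (y - x) ^ 2)⁻¹ := by
        rw [show (-(2:ℝ)) = -((2:ℕ):ℝ) by norm_num, Real.rpow_neg (le_of_lt (jap_pos _)),
          Real.rpow_natCast]
      have e2 : 1 / ‖x - y‖ ^ 2 ≤ 2 * jap (y - x) ^ (-(2:ℝ)) := by
        have hjsq := jap_sq (y - x)
        have hj2 : jap (y - x) ^ 2 ≤ 2 * ‖x - y‖ ^ 2 := by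
          rw [hjsq, hnorm]; nlinarith
        rw [hjrp, show (2:ℝ) * (jap (y - x) ^ 2)⁻¹ = 2 / jap (y - x) ^ 2 by ring,
          div_le_div_iff₀ (by positivity) (pow_pos (jap_pos _) 2)]
        nlinarith [jap_pos (y - x)]
      have e3 : L ^ (-(1 + δ)) * jap (y - x) ^ (-(2:ℝ))
          ≤ L ^ (-(3 + δ)) + jap (y - x) ^ (-(3 + δ)) := by
        rcases le_total L (jap (y - x)) with hc | hc
        · have h := Real.rpow_le_rpow_of_nonpos hLpos hc (by norm_num : -(2:ℝ) ≤ 0)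
          calc L ^ (-(1 + δ)) * jap (y - x) ^ (-(2:ℝ)) ≤ L ^ (-(1 + δ)) * L ^ (-(2:ℝ)) :=
              mul_le_mul_of_nonneg_left h (Real.rpow_nonneg hLpos.le _)
            _ = L ^ (-(3 + δ)) := by rw [← Real.rpow_add hLpos]; congr 1; ring
            _ ≤ _ := le_add_of_nonneg_right (Real.rpow_nonneg (jap_pos _).le _)
        · have h := Real.rpow_le_rpow_of_nonpos (jap_pos (y - x)) hc
            (by linarith : -(1 + δ) ≤ 0)
          calc L ^ (-(1 + δ)) * jap (y - x) ^ (-(2:ℝ))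
              ≤ jap (y - x) ^ (-(1 + δ)) * jap (y - x) ^ (-(2:ℝ)) :=
              mul_le_mul_of_nonneg_right h (Real.rpow_nonneg (jap_pos _).le _)
            _ = jap (y - x) ^ (-(3 + δ)) := by rw [← Real.rpow_add (jap_pos _)]; congr 1; ring
            _ ≤ _ := le_add_of_nonneg_left (Real.rpow_nonneg hLpos.le _)
      calc L ^ (-q) / ‖x - y‖ ^ 2 = L ^ (-(q - 1 - δ)) * (L ^ (-(1 + δ)) * (1 / ‖x - y‖ ^ 2)) := by
            rw [div_eq_mul_one_div, split]; ring
        _ ≤ (2 ^ (q - 1 - δ) * K ^ (-(q - 1 - δ))) *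
            (L ^ (-(1 + δ)) * (2 * jap (y - x) ^ (-(2:ℝ)))) := by
            apply mul_le_mul e1 (mul_le_mul_of_nonneg_left e2 (Real.rpow_nonneg hLpos.le _))
              (mul_nonneg (Real.rpow_nonneg hLpos.le _) (by positivity))
              (mul_nonneg (Real.rpow_nonneg (by norm_num) _) (Real.rpow_nonneg hKpos.le _))
        _ = 2 ^ (q - 1 - δ + 1) * K ^ (-(q - 1 - δ)) *
            (L ^ (-(1 + δ)) * jap (y - x) ^ (-(2:ℝ))) := by
            rw [Real.rpow_add (by norm_num : (0:ℝ) < 2), Real.rpow_one]; ring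
        _ ≤ 2 ^ (q - 1 - δ + 1) * K ^ (-(q - 1 - δ)) *
            (L ^ (-(3 + δ)) + jap (y - x) ^ (-(3 + δ))) :=
            mul_le_mul_of_nonneg_left e3
              (mul_nonneg (Real.rpow_nonneg (by norm_num) _) (Real.rpow_nonneg hKpos.le _))
        _ ≤ _ := by linarith

def Mint (a : ℝ) : ENNReal := ∫⁻ z : E3, ENNReal.ofReal (jap z ^ (-a))

def Jint : ENNReal := ∫⁻ z : E3, ENNReal.ofReal (sker z)

lemma lintegral_shift (f : E3 → ENNReal) (x : E3) : (∫⁻ y : E3, f (y - x)) = ∫⁻ y : E3, f y :=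
  lintegral_sub_right_eq_self f x

lemma inner_bound (q δ : ℝ) (hq : 1 < q) (hδ : 0 < δ) (hδq : δ ≤ (q - 1) / 2) (x : E3) :
    (∫⁻ y : E3, ENNReal.ofReal (jap y ^ (-q) / ‖x - y‖ ^ 2)) ≤
      ENNReal.ofReal (2 ^ q * jap x ^ (-q)) * Jint
      + ENNReal.ofReal (9 * jap x ^ (1 + δ - min q (3 + δ))) * Mint (3 + δ)
      + ENNReal.ofReal (2 ^ (q - 1 - δ + 1) * jap x ^ (-(q - 1 - δ))) *
          (Mint (3 + δ) + Mint (3 + δ)) := by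
  have hKpos := jap_pos x
  set t1 : E3 → ENNReal := fun y => ENNReal.ofReal (2 ^ q * jap x ^ (-q) * sker (y - x)) with ht1
  set t2 : E3 → ENNReal := fun y =>
    ENNReal.ofReal (9 * jap x ^ (1 + δ - min q (3 + δ)) * jap y ^ (-(3 + δ))) with ht2
  set t3 : E3 → ENNReal := fun y =>
    ENNReal.ofReal (2 ^ (q - 1 - δ + 1) * jap x ^ (-(q - 1 - δ)) *
      (jap y ^ (-(3 + δ)) + jap (y - x) ^ (-(3 + δ)))) with ht3
  have m1 : Measurable t1 := by
    apply ENNReal.measurable_ofReal.comp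
    exact (sker_meas.comp (measurable_id.sub_const x)).const_mul _
  have m2 : Measurable t2 := by
    apply ENNReal.measurable_ofReal.comp
    exact (jap_meas_rpow (-(3 + δ))).const_mul _
  have m3 : Measurable t3 := by
    apply ENNReal.measurable_ofReal.comp
    exact (((jap_meas_rpow (-(3 + δ)))).add
      ((jap_meas_rpow (-(3 + δ))).comp (measurable_id.sub_const x))).const_mul _
  have step : (∫⁻ y : E3, ENNReal.ofReal (jap y ^ (-q) / ‖x - y‖ ^ 2))
      ≤ ∫⁻ y : E3, (t1 y + t2 y + t3 y) := by
    apply lintegral_mono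
    intro y
    calc ENNReal.ofReal (jap y ^ (-q) / ‖x - y‖ ^ 2)
        ≤ ENNReal.ofReal (2 ^ q * jap x ^ (-q) * sker (y - x)
          + 9 * jap x ^ (1 + δ - min q (3 + δ)) * jap y ^ (-(3 + δ))
          + 2 ^ (q - 1 - δ + 1) * jap x ^ (-(q - 1 - δ)) *
            (jap y ^ (-(3 + δ)) + jap (y - x) ^ (-(3 + δ)))) :=
          ENNReal.ofReal_le_ofReal (pointwise_bound q δ hq hδ hδq x y)
      _ ≤ t1 y + t2 y + t3 y := le_trans (ENNReal.ofReal_add_le) (by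
          exact add_le_add ENNReal.ofReal_add_le le_rfl)
  refine step.trans ?_
  rw [lintegral_add_left (f := fun y => t1 y + t2 y) (m1.add m2), lintegral_add_left m1]
  have T1 : (∫⁻ y, t1 y) = ENNReal.ofReal (2 ^ q * jap x ^ (-q)) * Jint := by
    have : ∀ y : E3, t1 y = ENNReal.ofReal (2 ^ q * jap x ^ (-q)) *
        ENNReal.ofReal (sker (y - x)) := by
      intro y
      rw [ht1, ← ENNReal.ofReal_mul (by positivity)]
    simp_rw [this]
    rw [lintegral_const_mul' _ _ ENNReal.ofReal_ne_top]
    congr 1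
    exact lintegral_shift (fun z => ENNReal.ofReal (sker z)) x
  have T2 : (∫⁻ y, t2 y) = ENNReal.ofReal (9 * jap x ^ (1 + δ - min q (3 + δ))) *
      Mint (3 + δ) := by
    have : ∀ y : E3, t2 y = ENNReal.ofReal (9 * jap x ^ (1 + δ - min q (3 + δ))) *
        ENNReal.ofReal (jap y ^ (-(3 + δ))) := by
      intro y
      rw [ht2, ← ENNReal.ofReal_mul (by positivity)]
    simp_rw [this]
    rw [lintegral_const_mul' _ _ ENNReal.ofReal_ne_top]
    rfl
  have T3 : (∫⁻ y, t3 y) = ENNReal.ofReal (2 ^ (q - 1 - δ + 1) * jap x ^ (-(q - 1 - δ))) *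
      (Mint (3 + δ) + Mint (3 + δ)) := by
    have h0 : ∀ y : E3, t3 y = ENNReal.ofReal (2 ^ (q - 1 - δ + 1) * jap x ^ (-(q - 1 - δ))) *
        (ENNReal.ofReal (jap y ^ (-(3 + δ))) + ENNReal.ofReal (jap (y - x) ^ (-(3 + δ)))) := by
      intro y
      rw [ht3, ← ENNReal.ofReal_add (Real.rpow_nonneg (jap_pos _).le _)
        (Real.rpow_nonneg (jap_pos _).le _), ← ENNReal.ofReal_mul (by positivity)]
    simp_rw [h0]
    rw [lintegral_const_mul' _ _ ENNReal.ofReal_ne_top]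
    congr 1
    rw [lintegral_add_left ((jap_meas_rpow (-(3 + δ))).ennreal_ofReal)]
    congr 1
    exact lintegral_shift (fun z => ENNReal.ofReal (jap z ^ (-(3 + δ)))) x
  rw [T1, T2, T3]

lemma Mint_lt_top {a : ℝ} (ha : 3 < a) : Mint a < ⊤ := japFinite ha

lemma Jint_lt_top : Jint < ⊤ := sker_lt_top

lemma japConstFinite (A : ℝ) (hA : 0 ≤ A) {p : ℝ} (hp : 3 < p) :
    (∫⁻ x : E3, ENNReal.ofReal (A * jap x ^ (-p))) < ⊤ := by
  simp_rw [ENNReal.ofReal_mul hA]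
  rw [lintegral_const_mul' _ _ ENNReal.ofReal_ne_top]
  exact ENNReal.mul_lt_top ENNReal.ofReal_lt_top (japFinite hp)

lemma jap_mul (x : E3) (c1 c2 r1 r2 : ℝ) :
    (c1 * jap x ^ r1) * (c2 * jap x ^ r2) = (c1 * c2) * jap x ^ (r1 + r2) := by
  rw [Real.rpow_add (jap_pos x)]; ring

theorem stmt_17 (β : ℝ) (hβ : 3 < β) (V : E3 → ℂ) (hVm : Measurable V)
    (C0 : ℝ) (hV : ∀ x : E3, ‖V x‖ ≤ C0 * jap x ^ (-β))
    (σ : ℝ) (hσ1 : -(5 / 2 : ℝ) ≤ σ) (hσ2 : σ < -(3 / 2 : ℝ)) :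
    (∫⁻ x : E3, ∫⁻ y : E3,
      ENNReal.ofReal (jap x ^ (2 * (σ + 1)) * (‖V y‖ ^ 2 / ‖x - y‖ ^ 2) *
        jap y ^ (-(2 : ℝ) * σ))) < ⊤ := by
  have hC0 : 0 ≤ C0 := by
    have h := hV 0
    have hj : jap (0 : E3) = 1 := by
      rw [jap]; simp
    rw [hj, Real.one_rpow, mul_one] at h
    exact le_trans (norm_nonneg _) h
  set q : ℝ := 2 * β + 2 * σ with hqdef
  set δ : ℝ := min (β - 3) ((q - 1) / 2) with hδdef
  have hq : 1 < q := by rw [hqdef]; linarith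
  have hδ : 0 < δ := lt_min (by linarith) (by linarith)
  have hδq : δ ≤ (q - 1) / 2 := min_le_right _ _
  have hδβ : δ ≤ β - 3 := min_le_left _ _
  -- pointwise bound in both variables
  have hpt : ∀ x y : E3, jap x ^ (2 * (σ + 1)) * (‖V y‖ ^ 2 / ‖x - y‖ ^ 2) *
      jap y ^ (-(2 : ℝ) * σ)
      ≤ (C0 ^ 2 * jap x ^ (2 * (σ + 1))) * (jap y ^ (-q) / ‖x - y‖ ^ 2) := by
    intro x y
    have hLpos := jap_pos y
    have hV2 : ‖V y‖ ^ 2 ≤ C0 ^ 2 * jap y ^ (-(2 * β)) := by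
      calc ‖V y‖ ^ 2 ≤ (C0 * jap y ^ (-β)) ^ 2 := by
            apply pow_le_pow_left₀ (norm_nonneg _) (hV y)
        _ = C0 ^ 2 * (jap y ^ (-β) * jap y ^ (-β)) := by ring
        _ = C0 ^ 2 * jap y ^ (-(2 * β)) := by
            rw [← Real.rpow_add hLpos, show -β + -β = -(2 * β) by ring]
    calc jap x ^ (2 * (σ + 1)) * (‖V y‖ ^ 2 / ‖x - y‖ ^ 2) * jap y ^ (-(2 : ℝ) * σ)
        = (jap y ^ (-(2 : ℝ) * σ) * ‖V y‖ ^ 2) * (jap x ^ (2 * (σ + 1)) / ‖x - y‖ ^ 2) := by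
          ring
      _ ≤ (jap y ^ (-(2 : ℝ) * σ) * (C0 ^ 2 * jap y ^ (-(2 * β)))) *
          (jap x ^ (2 * (σ + 1)) / ‖x - y‖ ^ 2) := by
          apply mul_le_mul_of_nonneg_right
            (mul_le_mul_of_nonneg_left hV2 (Real.rpow_nonneg hLpos.le _))
          exact div_nonneg (Real.rpow_nonneg (jap_pos x).le _) (by positivity)
      _ = (C0 ^ 2 * jap x ^ (2 * (σ + 1))) * (jap y ^ (-q) / ‖x - y‖ ^ 2) := by
          rw [show jap y ^ (-(2 : ℝ) * σ) * (C0 ^ 2 * jap y ^ (-(2 * β)))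
            = C0 ^ 2 * (jap y ^ (-(2 : ℝ) * σ) * jap y ^ (-(2 * β))) by ring,
            ← Real.rpow_add hLpos, show -(2 : ℝ) * σ + -(2 * β) = -q by rw [hqdef]; ring]
          ring
  -- the three outer weight functions
  set A1 : ℝ := C0 ^ 2 * 2 ^ q with hA1
  set A2 : ℝ := C0 ^ 2 * 9 with hA2
  set A3 : ℝ := C0 ^ 2 * 2 ^ (q - 1 - δ + 1) with hA3
  set p1 : ℝ := 2 * β - 2 with hp1def
  set p2 : ℝ := min q (3 + δ) - 1 - δ - 2 * (σ + 1) with hp2def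
  set p3 : ℝ := 2 * β - 3 - δ with hp3def
  have hp1 : 3 < p1 := by rw [hp1def]; linarith
  have hp2 : 3 < p2 := by
    rcases le_total q (3 + δ) with h | h
    · rw [hp2def, min_eq_left h, hqdef]; linarith
    · rw [hp2def, min_eq_right h]; linarith
  have hp3 : 3 < p3 := by rw [hp3def]; linarith
  have hA1n : 0 ≤ A1 := by positivity
  have hA2n : 0 ≤ A2 := by positivity
  have hA3n : 0 ≤ A3 := by positivity
  -- per-x bound
  have hx : ∀ x : E3, (∫⁻ y : E3,
      ENNReal.ofReal (jap x ^ (2 * (σ + 1)) * (‖V y‖ ^ 2 / ‖x - y‖ ^ 2) *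
        jap y ^ (-(2 : ℝ) * σ)))
      ≤ ENNReal.ofReal (A1 * jap x ^ (-p1)) * Jint
        + ENNReal.ofReal (A2 * jap x ^ (-p2)) * Mint (3 + δ)
          + ENNReal.ofReal (A3 * jap x ^ (-p3)) * (Mint (3 + δ) + Mint (3 + δ)) := by
    intro x
    have hKpos := jap_pos x
    have hcn : (0:ℝ) ≤ C0 ^ 2 * jap x ^ (2 * (σ + 1)) := by positivity
    have step1 : (∫⁻ y : E3,
        ENNReal.ofReal (jap x ^ (2 * (σ + 1)) * (‖V y‖ ^ 2 / ‖x - y‖ ^ 2) *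
          jap y ^ (-(2 : ℝ) * σ)))
        ≤ ENNReal.ofReal (C0 ^ 2 * jap x ^ (2 * (σ + 1))) *
          ∫⁻ y : E3, ENNReal.ofReal (jap y ^ (-q) / ‖x - y‖ ^ 2) := by
      rw [← lintegral_const_mul' _ _ ENNReal.ofReal_ne_top]
      apply lintegral_mono
      intro y
      exact le_trans (ENNReal.ofReal_le_ofReal (hpt x y))
        (le_of_eq (ENNReal.ofReal_mul hcn))
    refine step1.trans ?_
    have step2 := inner_bound q δ hq hδ hδq x
    have step3 := mul_le_mul_right step2 (ENNReal.ofReal (C0 ^ 2 * jap x ^ (2 * (σ + 1))))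
    refine step3.trans ?_
    rw [mul_add, mul_add]
    refine add_le_add (add_le_add ?_ ?_) ?_
    · rw [← mul_assoc, ← ENNReal.ofReal_mul hcn,
        show C0 ^ 2 * jap x ^ (2 * (σ + 1)) * (2 ^ q * jap x ^ (-q))
          = (C0 ^ 2 * 2 ^ q) * jap x ^ (2 * (σ + 1) + -q) from jap_mul x _ _ _ _,
        show 2 * (σ + 1) + -q = -p1 by rw [hp1def, hqdef]; ring]
    · rw [← mul_assoc, ← ENNReal.ofReal_mul hcn,
        show C0 ^ 2 * jap x ^ (2 * (σ + 1)) * (9 * jap x ^ (1 + δ - min q (3 + δ)))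
          = (C0 ^ 2 * 9) * jap x ^ (2 * (σ + 1) + (1 + δ - min q (3 + δ)))
          from jap_mul x _ _ _ _,
        show 2 * (σ + 1) + (1 + δ - min q (3 + δ)) = -p2 by rw [hp2def]; ring]
    · rw [← mul_assoc, ← ENNReal.ofReal_mul hcn,
        show C0 ^ 2 * jap x ^ (2 * (σ + 1)) * (2 ^ (q - 1 - δ + 1) * jap x ^ (-(q - 1 - δ)))
          = (C0 ^ 2 * 2 ^ (q - 1 - δ + 1)) * jap x ^ (2 * (σ + 1) + -(q - 1 - δ))
          from jap_mul x _ _ _ _,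
        show 2 * (σ + 1) + -(q - 1 - δ) = -p3 by rw [hp3def, hqdef]; ring]
  -- conclude
  have mJ : Jint ≠ ⊤ := Jint_lt_top.ne
  have mM : Mint (3 + δ) ≠ ⊤ := (Mint_lt_top (by linarith)).ne
  calc (∫⁻ x : E3, ∫⁻ y : E3,
      ENNReal.ofReal (jap x ^ (2 * (σ + 1)) * (‖V y‖ ^ 2 / ‖x - y‖ ^ 2) *
        jap y ^ (-(2 : ℝ) * σ)))
      ≤ ∫⁻ x : E3, (ENNReal.ofReal (A1 * jap x ^ (-p1)) * Jint
        + ENNReal.ofReal (A2 * jap x ^ (-p2)) * Mint (3 + δ)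
          + ENNReal.ofReal (A3 * jap x ^ (-p3)) * (Mint (3 + δ) + Mint (3 + δ))) :=
        lintegral_mono hx
    _ = (∫⁻ x : E3, ENNReal.ofReal (A1 * jap x ^ (-p1))) * Jint
        + (∫⁻ x : E3, ENNReal.ofReal (A2 * jap x ^ (-p2))) * Mint (3 + δ)
          + (∫⁻ x : E3, ENNReal.ofReal (A3 * jap x ^ (-p3))) *
            (Mint (3 + δ) + Mint (3 + δ)) := by
        rw [lintegral_add_left (f := fun x => ENNReal.ofReal (A1 * jap x ^ (-p1)) * Jint + ENNReal.ofReal (A2 * jap x ^ (-p2)) * Mint (3 + δ)) ((((jap_meas_rpow (-p1)).const_mul A1).ennreal_ofReal.mul_const _).add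
            (((jap_meas_rpow (-p2)).const_mul A2).ennreal_ofReal.mul_const _)),
          lintegral_add_left (((jap_meas_rpow (-p1)).const_mul A1).ennreal_ofReal.mul_const _),
          lintegral_mul_const' _ _ mJ, lintegral_mul_const' _ _ mM,
          lintegral_mul_const' _ _ (by simp [ENNReal.add_eq_top, mM] : Mint (3 + δ) + Mint (3 + δ) ≠ ⊤)]
    _ < ⊤ := by
        apply ENNReal.add_lt_top.mpr
        refine ⟨ENNReal.add_lt_top.mpr ⟨?_, ?_⟩, ?_⟩
        · exact ENNReal.mul_lt_top (japConstFinite A1 hA1n hp1) Jint_lt_top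
        · exact ENNReal.mul_lt_top (japConstFinite A2 hA2n hp2) (Mint_lt_top (by linarith))
        · exact ENNReal.mul_lt_top (japConstFinite A3 hA3n hp3)
              (ENNReal.add_lt_top.mpr ⟨Mint_lt_top (by linarith), Mint_lt_top (by linarith)⟩)

end
end
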